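/- arXiv:2506.02432 — 2 statements merged into one kernel-verified Lean document; each statement's English description precedes it below -/
import Mathlib

section
/- Let h ≥ 2 be an integer and let M be a free abelian monoid with norm satisfying the counting axiom |{m : N(m) ≤ x}| = κx + O(x^θ), 0 ≤ θ < 1. Then the number of h-free elements m with N(m) ≤ x equals (κ/ζ_M(h)) x + O_h(x^τ) for some τ < 1, where ζ_M(s) = ∏_𝔭 (1 − N(𝔭)^{−s})^{−1}. -/
open Filter

/-- The norm of an element of the free abelian monoid on `P`. -/
def mnorm {P : Type*} (N : P → ℕ) (m : P →₀ ℕ) : ℕ :=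
  m.prod fun p k => N p ^ k


namespace HF
variable {P : Type*} {N : P → ℕ}


noncomputable def ind (S : Finset P) : P →₀ ℕ := ∑ p ∈ S, Finsupp.single p 1

lemma ind_apply_mem {S : Finset P} {p : P} (hp : p ∈ S) : ind S p = 1 := by
  classical
  simp [ind, Finsupp.finset_sum_apply, Finsupp.single_apply, Finset.sum_ite_eq, hp]

lemma ind_apply_not_mem {S : Finset P} {p : P} (hp : p ∉ S) : ind S p = 0 := by
  classical
  simp [ind, Finsupp.finset_sum_apply, Finsupp.single_apply, Finset.sum_ite_eq, hp]

lemma ind_injective : Function.Injective (ind (P := P)) := by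
  intro S T hST
  ext p
  constructor
  · intro hp
    by_contra hq
    have h1 := ind_apply_mem hp
    have h2 := ind_apply_not_mem hq
    rw [hST] at h1; omega
  · intro hp
    by_contra hq
    have h1 := ind_apply_mem hp
    have h2 := ind_apply_not_mem hq
    rw [← hST] at h1; omega

@[simp] lemma mnorm_zero : mnorm N 0 = 1 := by simp [mnorm]

lemma mnorm_add (a b : P →₀ ℕ) : mnorm N (a + b) = mnorm N a * mnorm N b := by
  classical
  exact Finsupp.prod_add_index' (fun p => pow_zero _) (fun p k1 k2 => pow_add _ _ _)

lemma one_le_mnorm (hN : ∀ p, 1 < N p) (m : P →₀ ℕ) : 1 ≤ mnorm N m := by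
  classical
  refine Finset.one_le_prod' fun p _ => Nat.one_le_pow _ _ ?_
  exact lt_of_lt_of_le Nat.zero_lt_one (hN p).le

lemma mnorm_pos (hN : ∀ p, 1 < N p) (m : P →₀ ℕ) : 0 < mnorm N m :=
  lt_of_lt_of_le Nat.zero_lt_one (one_le_mnorm hN m)

lemma mnorm_mono (hN : ∀ p, 1 < N p) {a b : P →₀ ℕ} (hab : a ≤ b) :
    mnorm N a ≤ mnorm N b := by
  obtain ⟨c, rfl⟩ := le_iff_exists_add.mp hab
  rw [mnorm_add]
  exact Nat.le_mul_of_pos_right _ (mnorm_pos hN c)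

lemma mnorm_nsmul (k : ℕ) (d : P →₀ ℕ) : mnorm N (k • d) = mnorm N d ^ k := by
  induction k with
  | zero => simp
  | succ n ih => rw [succ_nsmul, mnorm_add, ih, pow_succ]

lemma mnorm_single (p : P) : mnorm N (Finsupp.single p 1) = N p := by
  simp [mnorm, Finsupp.prod_single_index]

lemma mnorm_ind (S : Finset P) : mnorm N (ind S) = ∏ p ∈ S, N p := by
  classical
  induction S using Finset.induction_on with
  | empty => simp [ind]
  | insert _ _ hp =>
    rename_i a s ih
    rw [ind, Finset.sum_insert hp, mnorm_add, ← ind, ih, Finset.prod_insert hp,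
      mnorm_single]



lemma summable_rpow (hN : ∀ p, 1 < N p) {c : ℝ} (hc : 0 < c)
    (hA : ∀ y : ℝ, 1 ≤ y → {m : P →₀ ℕ | (mnorm N m : ℝ) ≤ y}.Finite ∧
      ({m : P →₀ ℕ | (mnorm N m : ℝ) ≤ y}.ncard : ℝ) ≤ c * y)
    {s : ℝ} (hs : 3/2 ≤ s) :
    Summable (fun m : P →₀ ℕ => (mnorm N m : ℝ) ^ (-s)) := by
  classical
  set r : ℝ := (2 : ℝ) ^ (-(1/2) : ℝ) with hr
  have hr0 : 0 ≤ r := Real.rpow_nonneg (by norm_num) _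
  have hr1 : r < 1 := Real.rpow_lt_one_of_one_lt_of_neg (by norm_num) (by norm_num)
  have one_le_mn : ∀ m : P →₀ ℕ, 1 ≤ mnorm N m := by
    intro m
    refine Finset.one_le_prod' fun p _ => Nat.one_le_pow _ _ ?_
    exact lt_of_lt_of_le Nat.zero_lt_one (hN p).le
  refine summable_of_sum_le (c := 2 * c * (1 - r)⁻¹)
    (fun m => Real.rpow_nonneg (Nat.cast_nonneg _) _) (fun u => ?_)
  set φ : (P →₀ ℕ) → ℕ := fun m => Nat.log 2 (mnorm N m) with hφ
  rw [← Finset.sum_fiberwise_of_maps_to (g := φ) (t := u.image φ)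
    (fun m hm => Finset.mem_image_of_mem φ hm)]
  have step1 : ∀ j ∈ u.image φ,
      (∑ m ∈ u.filter (fun m => φ m = j), (mnorm N m : ℝ) ^ (-s)) ≤ 2 * c * r ^ j := by
    intro j _
    set y : ℝ := (((2 : ℕ) ^ (j + 1) : ℕ) : ℝ) with hy
    have hy1 : (1 : ℝ) ≤ y := by
      rw [hy]; exact_mod_cast Nat.one_le_two_pow
    obtain ⟨hfin, hcard⟩ := hA y hy1
    have hsub : u.filter (fun m => φ m = j) ⊆ hfin.toFinset := by
      intro m hm
      rw [Set.Finite.mem_toFinset]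
      simp only [Finset.mem_filter] at hm
      have : mnorm N m < 2 ^ (j + 1) := by
        rw [← hm.2]
        exact Nat.lt_pow_succ_log_self (by norm_num) _
      show (mnorm N m : ℝ) ≤ y
      rw [hy]; exact_mod_cast this.le
    have hterm : ∀ m ∈ u.filter (fun m => φ m = j),
        (mnorm N m : ℝ) ^ (-s) ≤ ((2:ℝ) ^ j) ^ (-s) := by
      intro m hm
      simp only [Finset.mem_filter] at hm
      have h2j : ((2:ℝ) ^ j) ≤ (mnorm N m : ℝ) := by
        have := Nat.pow_log_le_self 2 (Nat.one_le_iff_ne_zero.mp (one_le_mn m))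
        rw [← hm.2]; exact_mod_cast this
      have h2jpos : (0:ℝ) < (2:ℝ) ^ j := by positivity
      rw [Real.rpow_neg (by positivity), Real.rpow_neg h2jpos.le]
      refine inv_anti₀ (Real.rpow_pos_of_pos h2jpos _) ?_
      exact Real.rpow_le_rpow h2jpos.le h2j (le_trans (by norm_num) hs)
    calc ∑ m ∈ u.filter (fun m => φ m = j), (mnorm N m : ℝ) ^ (-s)
        ≤ (u.filter (fun m => φ m = j)).card • (((2:ℝ) ^ j) ^ (-s)) :=
          Finset.sum_le_card_nsmul _ _ _ hterm
      _ = ((u.filter (fun m => φ m = j)).card : ℝ) * (((2:ℝ) ^ j) ^ (-s)) := by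
          rw [nsmul_eq_mul]
      _ ≤ (c * y) * (((2:ℝ) ^ j) ^ (-s)) := by
          refine mul_le_mul_of_nonneg_right ?_ (Real.rpow_nonneg (by positivity) _)
          calc ((u.filter (fun m => φ m = j)).card : ℝ)
              ≤ (hfin.toFinset.card : ℝ) := by
                exact_mod_cast Finset.card_le_card hsub
            _ = ({m : P →₀ ℕ | (mnorm N m : ℝ) ≤ y}.ncard : ℝ) := by
                rw [Set.ncard_eq_toFinset_card _ hfin]
            _ ≤ c * y := hcard
      _ ≤ 2 * c * r ^ j := by
          have hy2 : y = (2:ℝ) ^ (j+1) := by rw [hy]; push_cast; ring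
          have e1 : ((2:ℝ) ^ j) ^ (-s) = (2:ℝ) ^ ((j:ℝ) * (-s)) := by
            rw [← Real.rpow_natCast 2 j, ← Real.rpow_mul (by norm_num)]
          have e2 : r ^ j = (2:ℝ) ^ ((j:ℝ) * (-(1/2))) := by
            rw [hr, ← Real.rpow_natCast ((2:ℝ) ^ (-(1/2):ℝ)) j, ← Real.rpow_mul (by norm_num)]
            ring_nf
          rw [hy2, e1, e2]
          rw [← Real.rpow_natCast (2:ℝ) (j+1), mul_assoc,
            ← Real.rpow_add (by norm_num : (0:ℝ) < 2)]
          have e4 : (2:ℝ) ^ (((j+1 : ℕ):ℝ) + (j:ℝ) * (-s)) ≤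
              (2:ℝ) ^ ((1:ℝ) + (j:ℝ) * (-(1/2))) := by
            refine Real.rpow_le_rpow_of_exponent_le (by norm_num) ?_
            push_cast
            have : (0:ℝ) ≤ (j:ℝ) := Nat.cast_nonneg _
            nlinarith
          calc c * (2:ℝ) ^ (((j+1 : ℕ):ℝ) + (j:ℝ) * (-s))
              ≤ c * (2:ℝ) ^ ((1:ℝ) + (j:ℝ) * (-(1/2))) :=
                mul_le_mul_of_nonneg_left e4 hc.le
            _ = 2 * c * (2:ℝ) ^ ((j:ℝ) * (-(1/2))) := by
                rw [Real.rpow_add (by norm_num : (0:ℝ) < 2), Real.rpow_one]; ring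
  calc ∑ j ∈ u.image φ, ∑ m ∈ u.filter (fun m => φ m = j), (mnorm N m : ℝ) ^ (-s)
      ≤ ∑ j ∈ u.image φ, 2 * c * r ^ j := Finset.sum_le_sum step1
    _ = 2 * c * ∑ j ∈ u.image φ, r ^ j := by rw [Finset.mul_sum]
    _ ≤ 2 * c * (1 - r)⁻¹ := by
        refine mul_le_mul_of_nonneg_left ?_ (by positivity)
        calc ∑ j ∈ u.image φ, r ^ j
            ≤ ∑' j : ℕ, r ^ j :=
              Summable.sum_le_tsum _ (fun i _ => pow_nonneg hr0 i)
                (summable_geometric_of_lt_one hr0 hr1)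
          _ = (1 - r)⁻¹ := tsum_geometric_of_lt_one hr0 hr1

lemma identity (hN : ∀ p, 1 < N p) {h : ℕ} (hh : 2 ≤ h) {x : ℝ} (hx : 1 ≤ x)
    (hfinAll : ∀ y : ℝ, {m : P →₀ ℕ | (mnorm N m : ℝ) ≤ y}.Finite)
    (hSfin : {S : Finset P | ((mnorm N (ind S) ^ h : ℕ) : ℝ) ≤ x}.Finite) :
    ({m : P →₀ ℕ | (∀ p, m p ≤ h - 1) ∧ (mnorm N m : ℝ) ≤ x}.ncard : ℝ) =
      ∑ S ∈ hSfin.toFinset, (-1 : ℝ) ^ S.card *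
        ({m : P →₀ ℕ | (mnorm N m : ℝ) ≤ x / ((mnorm N (ind S) ^ h : ℕ) : ℝ)}.ncard : ℝ) := by
  classical
  set n : (P →₀ ℕ) → ℝ := fun m => (mnorm N m : ℝ) with hn
  have npos : ∀ m, 0 < n m := fun m => by
    simp only [hn]; exact_mod_cast mnorm_pos hN m
  have none : ∀ m, 1 ≤ n m := fun m => by
    simp only [hn]; exact_mod_cast one_le_mnorm hN m
  set w : Finset P → ℕ := fun S => mnorm N (ind S) ^ h with hw
  set T : (P →₀ ℕ) → Finset P := fun m => m.support.filter (fun p => h ≤ m p) with hT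
  set Fx : Finset (P →₀ ℕ) := (hfinAll x).toFinset with hFx
  set Fy : Finset P → Finset (P →₀ ℕ) := fun S => (hfinAll (x / (w S : ℝ))).toFinset with hFy
  set Sx : Finset (Finset P) := hSfin.toFinset with hSx
  -- T m characterization
  have memT : ∀ (m : P →₀ ℕ) (p : P), p ∈ T m ↔ h ≤ m p := by
    intro m p
    simp only [hT, Finset.mem_filter, Finsupp.mem_support_iff]
    constructor
    · exact fun hp => hp.2
    · intro hp; exact ⟨by omega, hp⟩
  have hfreeT : ∀ m : P →₀ ℕ, (T m = ∅) ↔ (∀ p, m p ≤ h - 1) := by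
    intro m
    rw [Finset.eq_empty_iff_forall_notMem]
    constructor
    · intro hp p
      have := hp p
      rw [memT] at this
      omega
    · intro hp p hmem
      rw [memT] at hmem
      have := hp p
      omega
  -- smul facts
  have hsmul_apply : ∀ (S : Finset P) (p : P), (h • ind S) p = h * ind S p := by
    intro S p
    simp
  have hle_of_sub : ∀ {S : Finset P} {m : P →₀ ℕ}, S ⊆ T m → h • ind S ≤ m := by
    intro S m hSm
    rw [Finsupp.le_def]
    intro p
    rw [hsmul_apply]
    by_cases hp : p ∈ S
    · rw [ind_apply_mem hp, mul_one]
      exact (memT m p).mp (hSm hp)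
    · rw [ind_apply_not_mem hp, mul_zero]
      exact Nat.zero_le _
  have hmw : ∀ (S : Finset P) (m' : P →₀ ℕ), mnorm N (m' + h • ind S) = mnorm N m' * w S := by
    intro S m'
    rw [mnorm_add, mnorm_nsmul]
  -- Step A/B: LHS as a sum over Fx
  have stepA : ({m : P →₀ ℕ | (∀ p, m p ≤ h - 1) ∧ n m ≤ x}.ncard : ℝ) =
      ∑ m ∈ Fx, (if T m = ∅ then (1:ℝ) else 0) := by
    have hseteq : {m : P →₀ ℕ | (∀ p, m p ≤ h - 1) ∧ n m ≤ x} =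
        ↑(Fx.filter (fun m => T m = ∅)) := by
      ext m
      simp only [Set.mem_setOf_eq, Finset.coe_filter, hFx, Set.Finite.mem_toFinset,
        Set.mem_setOf_eq, hfreeT m]
      tauto
    rw [hseteq, Set.ncard_coe_finset, Finset.card_filter]
    push_cast
    rfl
  -- Step C: inclusion-exclusion pointwise
  have stepC : ∀ m : P →₀ ℕ, (if T m = ∅ then (1:ℝ) else 0) =
      ∑ S ∈ (T m).powerset, (-1 : ℝ) ^ S.card := by
    intro m
    have hz := Finset.sum_powerset_neg_one_pow_card (x := T m)
    have : ((∑ S ∈ (T m).powerset, (-1 : ℤ) ^ S.card : ℤ) : ℝ) =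
        ∑ S ∈ (T m).powerset, (-1 : ℝ) ^ S.card := by push_cast; rfl
    rw [← this, hz]
    split <;> norm_num
  rw [stepA]
  simp only [stepC]
  rw [Finset.sum_sigma']
  -- Step E: reindex
  have stepE : ∑ a ∈ Fx.sigma (fun m => (T m).powerset), (-1:ℝ) ^ a.2.card =
      ∑ a ∈ Sx.sigma (fun S => Fy S), (-1:ℝ) ^ a.1.card := by
    refine Finset.sum_nbij' (i := fun a => ⟨a.2, a.1 - h • ind a.2⟩)
      (j := fun a => ⟨a.2 + h • ind a.1, a.1⟩) ?_ ?_ ?_ ?_ ?_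
    · rintro ⟨m, S⟩ hmS
      rw [Finset.mem_sigma] at hmS
      obtain ⟨hm, hS⟩ := hmS
      rw [Finset.mem_powerset] at hS
      rw [hFx, Set.Finite.mem_toFinset, Set.mem_setOf_eq] at hm
      have hle := hle_of_sub hS
      have hwn : (w S : ℝ) = ((mnorm N (h • ind S) : ℕ) : ℝ) := by
        show ((mnorm N (ind S) ^ h : ℕ) : ℝ) = _
        rw [mnorm_nsmul]
      have hwx : (w S : ℝ) ≤ x := by
        rw [hwn]
        refine le_trans ?_ hm
        exact_mod_cast mnorm_mono hN hle
      have hwpos : (0:ℝ) < (w S : ℝ) := by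
        rw [hwn]; exact_mod_cast mnorm_pos hN _
      rw [Finset.mem_sigma]
      constructor
      · rw [hSx, Set.Finite.mem_toFinset]; exact hwx
      · rw [hFy, Set.Finite.mem_toFinset, Set.mem_setOf_eq]
        rw [le_div_iff₀ hwpos]
        have : (m - h • ind S) + h • ind S = m := tsub_add_cancel_of_le hle
        calc (mnorm N (m - h • ind S) : ℝ) * (w S : ℝ)
            = (mnorm N ((m - h • ind S) + h • ind S) : ℝ) := by
              rw [hmw]; push_cast; ring
          _ ≤ x := by rw [this]; exact hm
    · rintro ⟨S, m'⟩ hSm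
      rw [Finset.mem_sigma] at hSm
      obtain ⟨hS, hm'⟩ := hSm
      rw [hSx, Set.Finite.mem_toFinset, Set.mem_setOf_eq] at hS
      rw [hFy, Set.Finite.mem_toFinset, Set.mem_setOf_eq] at hm'
      have hwpos : (0:ℝ) < (w S : ℝ) := by
        have := mnorm_pos hN (ind S)
        rw [hw]; positivity
      rw [Finset.mem_sigma]
      constructor
      · rw [hFx, Set.Finite.mem_toFinset, Set.mem_setOf_eq]
        show (mnorm N (m' + h • ind S) : ℝ) ≤ x
        rw [hmw]
        push_cast
        calc (mnorm N m' : ℝ) * (w S : ℝ) ≤ (x / (w S:ℝ)) * (w S:ℝ) :=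
              mul_le_mul_of_nonneg_right hm' hwpos.le
          _ = x := div_mul_cancel₀ x hwpos.ne'
      · rw [Finset.mem_powerset]
        intro p hp
        rw [memT]
        rw [Finsupp.add_apply, hsmul_apply, ind_apply_mem hp, mul_one]
        omega
    · rintro ⟨m, S⟩ hmS
      rw [Finset.mem_sigma] at hmS
      obtain ⟨_, hS⟩ := hmS
      rw [Finset.mem_powerset] at hS
      have hle := hle_of_sub hS
      show (⟨(m - h • ind S) + h • ind S, S⟩ : (_ : P →₀ ℕ) × Finset P) = ⟨m, S⟩
      rw [tsub_add_cancel_of_le hle]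
    · rintro ⟨S, m'⟩ _
      show (⟨S, (m' + h • ind S) - h • ind S⟩ : (_ : Finset P) × (P →₀ ℕ)) = ⟨S, m'⟩
      rw [add_tsub_cancel_right]
    · rintro ⟨m, S⟩ _; rfl
  rw [stepE, Finset.sum_sigma]
  refine Finset.sum_congr rfl fun S hS => ?_
  show ∑ _s ∈ Fy S, (-1:ℝ) ^ S.card = _
  rw [Finset.sum_const, nsmul_eq_mul, mul_comm]
  congr 1
  rw [Set.ncard_eq_toFinset_card _ (hfinAll (x / ((mnorm N (ind S) ^ h : ℕ) : ℝ)))]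

section Euler

variable (N) (h : ℕ)

noncomputable def gm (S : Finset P) : ℝ :=
  (-1 : ℝ) ^ S.card * ((mnorm N (ind S) : ℝ) ^ h)⁻¹

lemma abs_gm (S : Finset P) : |gm N h S| = ((mnorm N (ind S) : ℝ) ^ h)⁻¹ := by
  have : (0:ℝ) ≤ ((mnorm N (ind S) : ℝ) ^ h)⁻¹ := by positivity
  rw [gm, abs_mul, abs_pow, abs_neg, abs_one, one_pow, one_mul, abs_of_nonneg this]

variable {N h}

lemma npow_inv_le_rpow (hN : ∀ p, 1 < N p) (hh : 2 ≤ h) (m : P →₀ ℕ) :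
    ((mnorm N m : ℝ) ^ h)⁻¹ ≤ (mnorm N m : ℝ) ^ (-(3/2) : ℝ) := by
  have h1 : (1:ℝ) ≤ (mnorm N m : ℝ) := by exact_mod_cast one_le_mnorm hN m
  have h0 : (0:ℝ) < (mnorm N m : ℝ) := lt_of_lt_of_le one_pos h1
  rw [← Real.rpow_natCast (mnorm N m : ℝ) h, ← Real.rpow_neg h0.le]
  refine Real.rpow_le_rpow_of_exponent_le h1 ?_
  have : (3/2 : ℝ) ≤ (h : ℝ) := by
    calc (3/2 : ℝ) ≤ 2 := by norm_num
    _ ≤ (h:ℝ) := by exact_mod_cast hh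
  linarith

lemma summable_gm (hN : ∀ p, 1 < N p) (hh : 2 ≤ h)
    (hg : Summable (fun S : Finset P => (mnorm N (ind S) : ℝ) ^ (-(3/2) : ℝ))) :
    Summable (gm N h) := by
  refine Summable.of_abs ?_
  refine Summable.of_nonneg_of_le (fun S => abs_nonneg _) (fun S => ?_) hg
  rw [abs_gm]
  exact npow_inv_le_rpow hN hh _

lemma prod_eq_sum_powerset (F : Finset P) :
    ∏ p ∈ F, (1 - ((N p : ℝ) ^ h)⁻¹) = ∑ S ∈ F.powerset, gm N h S := by
  classical
  have := Finset.prod_add (fun p => -((N p : ℝ) ^ h)⁻¹) (fun _ => (1:ℝ)) F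
  rw [show ∏ p ∈ F, (1 - ((N p : ℝ) ^ h)⁻¹) =
      ∏ p ∈ F, (-((N p : ℝ) ^ h)⁻¹ + 1) from Finset.prod_congr rfl (by intros; ring), this]
  refine Finset.sum_congr rfl fun S hS => ?_
  rw [Finset.prod_const_one, mul_one, gm]
  have e1 : (-1:ℝ)^S.card * ∏ p ∈ S, ((N p : ℝ) ^ h)⁻¹ = ∏ p ∈ S, -((N p : ℝ) ^ h)⁻¹ := by
    rw [← Finset.prod_const (-1:ℝ), ← Finset.prod_mul_distrib]
    exact Finset.prod_congr rfl (fun _ _ => by ring)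
  rw [← e1]
  congr 1
  rw [Finset.prod_inv_distrib]
  congr 1
  rw [Finset.prod_pow, mnorm_ind, Nat.cast_prod]

lemma tendsto_powerset_atTop : Tendsto (Finset.powerset : Finset P → Finset (Finset P)) atTop atTop := by
  classical
  refine Filter.tendsto_atTop_atTop_of_monotone (fun A B hAB => Finset.powerset_mono.mpr hAB)
    (fun T => ⟨T.sup id, fun S hS => Finset.mem_powerset.mpr (Finset.le_sup (f := id) hS)⟩)

lemma hasProd_one_sub (hN : ∀ p, 1 < N p) (hh : 2 ≤ h)
    (hg : Summable (fun S : Finset P => (mnorm N (ind S) : ℝ) ^ (-(3/2) : ℝ))) :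
    HasProd (fun p : P => 1 - ((N p : ℝ) ^ h)⁻¹) (∑' S : Finset P, gm N h S) := by
  have hs : HasSum (gm N h) (∑' S : Finset P, gm N h S) := (summable_gm hN hh hg).hasSum
  have : (fun F : Finset P => ∏ p ∈ F, (1 - ((N p : ℝ) ^ h)⁻¹)) =
      (fun T : Finset (Finset P) => ∑ S ∈ T, gm N h S) ∘ Finset.powerset :=
    funext fun F => prod_eq_sum_powerset F
  rw [HasProd, this]
  exact hs.comp tendsto_powerset_atTop

lemma one_sub_sum_le_prod (a : P → ℝ) (ha0 : ∀ p, 0 ≤ a p) (ha1 : ∀ p, a p ≤ 1)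
    (F : Finset P) : 1 - ∑ p ∈ F, a p ≤ ∏ p ∈ F, (1 - a p) := by
  classical
  induction F using Finset.induction_on with
  | empty => simp
  | insert _ _ hp =>
    rename_i q F ih
    rw [Finset.sum_insert hp, Finset.prod_insert hp]
    have h1 : (0:ℝ) ≤ ∏ p ∈ F, (1 - a p) :=
      Finset.prod_nonneg (fun p _ => by linarith [ha1 p])
    have h2 : 1 - a q ≥ 0 := by linarith [ha1 q]
    nlinarith [ha0 q, Finset.sum_nonneg (fun p (_ : p ∈ F) => ha0 p)]

lemma summable_a (hN : ∀ p, 1 < N p) (hh : 2 ≤ h)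
    (hg : Summable (fun S : Finset P => (mnorm N (ind S) : ℝ) ^ (-(3/2) : ℝ))) :
    Summable (fun p : P => ((N p : ℝ) ^ h)⁻¹) := by
  have h1 : Summable (fun p : P => (mnorm N (ind {p}) : ℝ) ^ (-(3/2) : ℝ)) :=
    hg.comp_injective Finset.singleton_injective
  refine Summable.of_nonneg_of_le (fun p => by positivity) (fun p => ?_) h1
  have := npow_inv_le_rpow hN hh (ind {p})
  calc ((N p : ℝ) ^ h)⁻¹ = ((mnorm N (ind {p}) : ℝ) ^ h)⁻¹ := by
        rw [mnorm_ind]; simp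
    _ ≤ _ := this

lemma a_le (hN : ∀ p, 1 < N p) (hh : 2 ≤ h) (p : P) : ((N p : ℝ) ^ h)⁻¹ ≤ 1/4 := by
  have h2 : (2:ℝ) ≤ (N p : ℝ) := by exact_mod_cast hN p
  have : (4:ℝ) ≤ (N p : ℝ) ^ h := by
    calc (4:ℝ) = 2 ^ 2 := by norm_num
    _ ≤ (2:ℝ) ^ h := pow_le_pow_right₀ (by norm_num) hh
    _ ≤ (N p : ℝ) ^ h := pow_le_pow_left₀ (by norm_num) h2 h
  rw [inv_le_comm₀ (by linarith) (by norm_num)]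
  linarith

lemma tsum_gm_pos (hN : ∀ p, 1 < N p) (hh : 2 ≤ h)
    (hg : Summable (fun S : Finset P => (mnorm N (ind S) : ℝ) ^ (-(3/2) : ℝ))) :
    0 < ∑' S : Finset P, gm N h S := by
  set a : P → ℝ := fun p => ((N p : ℝ) ^ h)⁻¹ with ha
  have ha0 : ∀ p, 0 ≤ a p := fun p => by positivity
  have ha1 : ∀ p, a p ≤ 1 := fun p => le_trans (a_le hN hh p) (by norm_num)
  obtain ⟨F1, hF1⟩ := summable_iff_vanishing.mp (summable_a hN hh hg) (Set.Iio (1/2))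
    (Iio_mem_nhds (by norm_num))
  have key : ∀ F : Finset P, F1 ⊆ F →
      (∏ p ∈ F1, (1 - a p)) * (1/2) ≤ ∏ p ∈ F, (1 - a p) := by
    intro F hF
    classical
    rw [← Finset.prod_sdiff hF]
    have ht : ∑ p ∈ F \ F1, a p < 1/2 := hF1 _ Finset.sdiff_disjoint
    have h3 : (1:ℝ)/2 ≤ ∏ p ∈ F \ F1, (1 - a p) := by
      have := one_sub_sum_le_prod a ha0 ha1 (F \ F1)
      linarith
    have h4 : (0:ℝ) ≤ ∏ p ∈ F1, (1 - a p) :=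
      Finset.prod_nonneg (fun p _ => by linarith [ha1 p])
    calc (∏ p ∈ F1, (1 - a p)) * (1/2) = (1/2) * ∏ p ∈ F1, (1 - a p) := by ring
      _ ≤ (∏ p ∈ F \ F1, (1 - a p)) * ∏ p ∈ F1, (1 - a p) :=
        mul_le_mul_of_nonneg_right h3 h4
  have hpos : 0 < (∏ p ∈ F1, (1 - a p)) * (1/2) := by
    have : ∀ p ∈ F1, 0 < 1 - a p := fun p _ => by linarith [a_le hN hh p]
    have := Finset.prod_pos this
    linarith
  refine lt_of_lt_of_le hpos ?_
  refine ge_of_tendsto (hasProd_one_sub hN hh hg) ?_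
  filter_upwards [Filter.eventually_ge_atTop F1] with F hF
  exact key F hF

lemma tprod_inv_eq (hN : ∀ p, 1 < N p) (hh : 2 ≤ h)
    (hg : Summable (fun S : Finset P => (mnorm N (ind S) : ℝ) ^ (-(3/2) : ℝ))) :
    ∏' p : P, (1 - ((N p : ℝ) ^ h)⁻¹)⁻¹ = (∑' S : Finset P, gm N h S)⁻¹ := by
  have hK := tsum_gm_pos hN hh hg
  have hp : HasProd (fun p : P => (1 - ((N p : ℝ) ^ h)⁻¹)⁻¹)
      (∑' S : Finset P, gm N h S)⁻¹ := by
    rw [HasProd]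
    have : (fun F : Finset P => ∏ p ∈ F, (1 - ((N p : ℝ) ^ h)⁻¹)⁻¹) =
        (fun F : Finset P => (∏ p ∈ F, (1 - ((N p : ℝ) ^ h)⁻¹))⁻¹) := by
      funext F; rw [Finset.prod_inv_distrib]
    rw [this]
    exact Filter.Tendsto.inv₀ (hasProd_one_sub hN hh hg) hK.ne'
  exact hp.tprod_eq

end Euler

lemma Sfin (hN : ∀ p, 1 < N p) {h : ℕ} (hh : 2 ≤ h) {x : ℝ}
    (hfin : {m : P →₀ ℕ | (mnorm N m : ℝ) ≤ x}.Finite) :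
    {S : Finset P | ((mnorm N (ind S) ^ h : ℕ) : ℝ) ≤ x}.Finite := by
  refine Set.Finite.of_finite_image ?_ ind_injective.injOn
  refine hfin.subset ?_
  rintro m ⟨S, hS, rfl⟩
  simp only [Set.mem_setOf_eq] at hS ⊢
  have h1 : mnorm N (ind S) ≤ mnorm N (ind S) ^ h := Nat.le_self_pow (by omega) _
  exact le_trans (by exact_mod_cast h1) hS

lemma rpow_tail {b x : ℝ} {h : ℕ} (hb : 1 ≤ b) (hx : 1 ≤ x) (hh : 2 ≤ h)
    (hxb : x < b ^ h) : (b ^ h)⁻¹ ≤ x ^ (-(1/4) : ℝ) * b ^ (-(3/2) : ℝ) := by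
  have hb0 : (0:ℝ) < b := lt_of_lt_of_le one_pos hb
  have hx0 : (0:ℝ) < x := lt_of_lt_of_le one_pos hx
  have hh2 : (2:ℝ) ≤ (h:ℝ) := by exact_mod_cast hh
  have key : (b ^ h)⁻¹ = b ^ ((h:ℝ) * (-(1/4))) * b ^ ((h:ℝ) * (-(3/4))) := by
    rw [← Real.rpow_add hb0, ← Real.rpow_natCast b h, ← Real.rpow_neg hb0.le]
    congr 1
    ring
  rw [key]
  have f1 : b ^ ((h:ℝ) * (-(1/4))) ≤ x ^ (-(1/4) : ℝ) := by
    have e1 : b ^ ((h:ℝ) * (-(1/4))) = ((b ^ h : ℝ) ^ ((1:ℝ)/4))⁻¹ := by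
      rw [← Real.rpow_natCast b h, ← Real.rpow_mul hb0.le, ← Real.rpow_neg hb0.le]
      congr 1; ring
    have e2 : x ^ (-(1/4) : ℝ) = (x ^ ((1:ℝ)/4))⁻¹ := Real.rpow_neg hx0.le _
    rw [e1, e2]
    refine inv_anti₀ (Real.rpow_pos_of_pos hx0 _) ?_
    exact Real.rpow_le_rpow hx0.le hxb.le (by norm_num)
  have f2 : b ^ ((h:ℝ) * (-(3/4))) ≤ b ^ (-(3/2) : ℝ) := by
    refine Real.rpow_le_rpow_of_exponent_le hb ?_
    nlinarith
  have g1 : (0:ℝ) ≤ b ^ ((h:ℝ) * (-(3/4))) := (Real.rpow_pos_of_pos hb0 _).le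
  have g2 : (0:ℝ) ≤ x ^ (-(1/4) : ℝ) := (Real.rpow_pos_of_pos hx0 _).le
  exact mul_le_mul f1 f2 g1 g2

lemma rpow_w {b : ℝ} {h : ℕ} {τ : ℝ} (hb : 1 ≤ b) (hh : 2 ≤ h) (hτ : 3/4 ≤ τ) :
    (((b ^ h : ℝ)) ^ τ)⁻¹ ≤ b ^ (-(3/2) : ℝ) := by
  have hb0 : (0:ℝ) < b := lt_of_lt_of_le one_pos hb
  have hh2 : (2:ℝ) ≤ (h:ℝ) := by exact_mod_cast hh
  have e1 : ((b ^ h : ℝ)) ^ τ = b ^ ((h:ℝ) * τ) := by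
    rw [← Real.rpow_natCast b h, ← Real.rpow_mul hb0.le]
  rw [e1, ← Real.rpow_neg hb0.le]
  refine Real.rpow_le_rpow_of_exponent_le hb ?_
  nlinarith

end HF

/-- Under the counting axiom, the number of `h`-free elements of norm at most `x` equals
`(κ/ζ_M(h)) x + O_h(x^τ)` for some `τ < 1`, where `ζ_M(h) = ∏_𝔭 (1 − N(𝔭)^{−h})⁻¹`. -/
theorem hfree_count {P : Type*} [Countable P]
    (N : P → ℕ) (hN : ∀ p, 1 < N p) (h : ℕ) (hh : 2 ≤ h)
    (κ : ℝ) (hκ : 0 < κ) (θ : ℝ) (hθ0 : 0 ≤ θ) (hθ1 : θ < 1) (C : ℝ)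
    (hcount : ∀ x : ℝ, 1 ≤ x →
      {m : P →₀ ℕ | (mnorm N m : ℝ) ≤ x}.Finite ∧
      |({m : P →₀ ℕ | (mnorm N m : ℝ) ≤ x}.ncard : ℝ) - κ * x| ≤ C * x ^ θ) :
    ∃ τ : ℝ, τ < 1 ∧ ∃ D : ℝ, ∀ x : ℝ, 2 ≤ x →
      {m : P →₀ ℕ | (∀ p, m p ≤ h - 1) ∧ (mnorm N m : ℝ) ≤ x}.Finite ∧
      |({m : P →₀ ℕ | (∀ p, m p ≤ h - 1) ∧ (mnorm N m : ℝ) ≤ x}.ncard : ℝ)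
          - κ / (∏' p : P, (1 - ((N p : ℝ) ^ h)⁻¹)⁻¹) * x| ≤ D * x ^ τ := by
  classical
  have hC0 : 0 ≤ C := by
    have h1 := (hcount 1 le_rfl).2
    have h2 : (1:ℝ) ^ θ = 1 := Real.one_rpow θ
    have h3 := abs_nonneg (({m : P →₀ ℕ | (mnorm N m : ℝ) ≤ 1}.ncard : ℝ) - κ * 1)
    nlinarith
  have hfinAll : ∀ y : ℝ, {m : P →₀ ℕ | (mnorm N m : ℝ) ≤ y}.Finite := by
    intro y
    rcases le_or_gt 1 y with hy | hy
    · exact (hcount y hy).1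
    · exact (hcount 1 le_rfl).1.subset (fun m hm => le_trans hm hy.le)
  have hA : ∀ y : ℝ, 1 ≤ y → {m : P →₀ ℕ | (mnorm N m : ℝ) ≤ y}.Finite ∧
      ({m : P →₀ ℕ | (mnorm N m : ℝ) ≤ y}.ncard : ℝ) ≤ (κ + C) * y := by
    intro y hy
    obtain ⟨h1, h2⟩ := hcount y hy
    refine ⟨h1, ?_⟩
    have h3 : y ^ θ ≤ y := by
      calc y ^ θ ≤ y ^ (1:ℝ) := Real.rpow_le_rpow_of_exponent_le hy hθ1.le
      _ = y := Real.rpow_one y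
    have h4 := (abs_le.mp h2).2
    have h5 : C * y ^ θ ≤ C * y := mul_le_mul_of_nonneg_left h3 hC0
    nlinarith
  have hκC : 0 < κ + C := by linarith
  have hsum := HF.summable_rpow hN hκC hA (le_refl (3/2:ℝ))
  have hg : Summable (fun S : Finset P => (mnorm N (HF.ind S) : ℝ) ^ (-(3/2) : ℝ)) :=
    hsum.comp_injective HF.ind_injective
  have hg0 : ∀ S : Finset P, 0 ≤ (mnorm N (HF.ind S) : ℝ) ^ (-(3/2) : ℝ) :=
    fun S => Real.rpow_nonneg (Nat.cast_nonneg _) _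
  set K3 : ℝ := ∑' S : Finset P, (mnorm N (HF.ind S) : ℝ) ^ (-(3/2) : ℝ) with hK3
  have hK3nn : 0 ≤ K3 := tsum_nonneg hg0
  set K : ℝ := ∑' S : Finset P, HF.gm N h S with hKdef
  have hKpos : 0 < K := HF.tsum_gm_pos hN hh hg
  set τ : ℝ := max θ (3/4) with hτdef
  have hτ1 : τ < 1 := max_lt hθ1 (by norm_num)
  have hτ34 : (3/4:ℝ) ≤ τ := le_max_right _ _
  have hτθ : θ ≤ τ := le_max_left _ _
  refine ⟨τ, hτ1, κ * K3 + C * K3, fun x hx2 => ?_⟩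
  have hx1 : (1:ℝ) ≤ x := by linarith
  have hx0 : (0:ℝ) < x := by linarith
  refine ⟨(hfinAll x).subset (fun m hm => hm.2), ?_⟩
  rw [HF.tprod_inv_eq hN hh hg, ← hKdef, div_inv_eq_mul]
  have hSfin := HF.Sfin hN hh (hfinAll x)
  have hid := HF.identity hN hh hx1 hfinAll hSfin
  set Sx : Finset (Finset P) := hSfin.toFinset with hSx
  set w : Finset P → ℝ := fun S => ((mnorm N (HF.ind S) ^ h : ℕ) : ℝ) with hwdef
  have hw_eq : ∀ S : Finset P, w S = ((mnorm N (HF.ind S) : ℝ)) ^ h := fun S => by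
    simp [hwdef]
  have hmn1 : ∀ S : Finset P, (1:ℝ) ≤ (mnorm N (HF.ind S) : ℝ) := fun S => by
    exact_mod_cast HF.one_le_mnorm hN _
  have hw1 : ∀ S, (1:ℝ) ≤ w S := fun S => by
    rw [hw_eq]; exact one_le_pow₀ (hmn1 S)
  have hw0 : ∀ S, (0:ℝ) < w S := fun S => lt_of_lt_of_le one_pos (hw1 S)
  set A : Finset P → ℝ :=
    fun S => ({m : P →₀ ℕ | (mnorm N m : ℝ) ≤ x / w S}.ncard : ℝ) with hAdef
  set e : Finset P → ℝ := fun S => A S - κ * (x / w S) with hedef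
  have hySx : ∀ S ∈ Sx, 1 ≤ x / w S := by
    intro S hS
    rw [hSx, Set.Finite.mem_toFinset] at hS
    rw [le_div_iff₀ (hw0 S), one_mul]
    exact hS
  have he : ∀ S ∈ Sx, |e S| ≤ C * (x / w S) ^ θ := fun S hS =>
    (hcount (x / w S) (hySx S hS)).2
  -- identity in terms of A
  have hid' : ({m : P →₀ ℕ | (∀ p, m p ≤ h - 1) ∧ (mnorm N m : ℝ) ≤ x}.ncard : ℝ) =
      ∑ S ∈ Sx, (-1 : ℝ) ^ S.card * A S := hid
  -- split the sum
  have hsplit : ∑ S ∈ Sx, (-1:ℝ)^S.card * A S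
      = κ * x * (∑ S ∈ Sx, HF.gm N h S) + ∑ S ∈ Sx, (-1:ℝ)^S.card * e S := by
    rw [Finset.mul_sum, ← Finset.sum_add_distrib]
    refine Finset.sum_congr rfl fun S hS => ?_
    have hAe : A S = κ * (x / w S) + e S := by rw [hedef]; ring
    rw [hAe]
    simp only [HF.gm]
    rw [div_eq_mul_inv, ← hw_eq]
    ring
  -- tail bound
  have hgm_sum : Summable (HF.gm N h) := HF.summable_gm hN hh hg
  have hcompl := Summable.sum_add_tsum_compl (s := Sx) hgm_sum
  have hcompl3 := Summable.sum_add_tsum_compl (s := Sx)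
    (f := fun S : Finset P => (mnorm N (HF.ind S) : ℝ) ^ (-(3/2) : ℝ)) hg
  have htail : |K - ∑ S ∈ Sx, HF.gm N h S| ≤ x ^ (-(1/4):ℝ) * K3 := by
    have h1 : K - ∑ S ∈ Sx, HF.gm N h S
        = ∑' S : ↥((↑Sx : Set (Finset P))ᶜ), HF.gm N h S.val := by
      rw [hKdef]; linarith [hcompl]
    rw [h1]
    have hsub : Summable (fun S : ↥((↑Sx : Set (Finset P))ᶜ) => HF.gm N h S.val) :=
      hgm_sum.subtype _
    have hsub32 : Summable (fun S : ↥((↑Sx : Set (Finset P))ᶜ) =>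
        (mnorm N (HF.ind S.val) : ℝ) ^ (-(3/2) : ℝ)) := hg.subtype _
    have habs : Summable (fun S : ↥((↑Sx : Set (Finset P))ᶜ) => |HF.gm N h S.val|) := by
      refine Summable.of_nonneg_of_le (fun S => abs_nonneg _) (fun S => ?_) hsub32
      rw [HF.abs_gm]
      exact HF.npow_inv_le_rpow hN hh _
    calc |∑' S : ↥((↑Sx : Set (Finset P))ᶜ), HF.gm N h S.val|
        ≤ ∑' S : ↥((↑Sx : Set (Finset P))ᶜ), |HF.gm N h S.val| := by
          have := norm_tsum_le_tsum_norm (f := fun S : ↥((↑Sx : Set (Finset P))ᶜ) =>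
            HF.gm N h S.val) (by simpa [Real.norm_eq_abs] using habs)
          simpa [Real.norm_eq_abs] using this
      _ ≤ ∑' S : ↥((↑Sx : Set (Finset P))ᶜ),
            x ^ (-(1/4):ℝ) * (mnorm N (HF.ind S.val) : ℝ) ^ (-(3/2) : ℝ) := by
          refine Summable.tsum_le_tsum (fun S => ?_) habs ?_
          · rw [HF.abs_gm]
            have hSnot : ¬ ((mnorm N (HF.ind S.val) ^ h : ℕ) : ℝ) ≤ x := by
              have hprop := S.property
              intro hc
              exact hprop (Finset.mem_coe.mpr ((Set.Finite.mem_toFinset hSfin).mpr hc))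
            push_neg at hSnot
            have hxb : x < (mnorm N (HF.ind S.val) : ℝ) ^ h := by
              calc x < ((mnorm N (HF.ind S.val) ^ h : ℕ) : ℝ) := hSnot
              _ = (mnorm N (HF.ind S.val) : ℝ) ^ h := by push_cast; ring
            exact HF.rpow_tail (hmn1 S.val) hx1 hh hxb
          · exact hsub32.mul_left _
      _ = x ^ (-(1/4):ℝ) * ∑' S : ↥((↑Sx : Set (Finset P))ᶜ),
            (mnorm N (HF.ind S.val) : ℝ) ^ (-(3/2) : ℝ) := tsum_mul_left
      _ ≤ x ^ (-(1/4):ℝ) * K3 := by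
          refine mul_le_mul_of_nonneg_left ?_ (Real.rpow_pos_of_pos hx0 _).le
          have h2 : 0 ≤ ∑ S ∈ Sx, (mnorm N (HF.ind S) : ℝ) ^ (-(3/2) : ℝ) :=
            Finset.sum_nonneg (fun S _ => hg0 S)
          linarith [hcompl3]
  -- error sum bound
  have herr : ∑ S ∈ Sx, |(-1:ℝ)^S.card * e S| ≤ C * x ^ τ * K3 := by
    calc ∑ S ∈ Sx, |(-1:ℝ)^S.card * e S|
        ≤ ∑ S ∈ Sx, C * x ^ τ * (mnorm N (HF.ind S) : ℝ) ^ (-(3/2) : ℝ) := by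
          refine Finset.sum_le_sum fun S hS => ?_
          rw [abs_mul, abs_pow, abs_neg, abs_one, one_pow, one_mul]
          have hy1 := hySx S hS
          have hy0 : (0:ℝ) < x / w S := lt_of_lt_of_le one_pos hy1
          calc |e S| ≤ C * (x / w S) ^ θ := he S hS
            _ ≤ C * (x / w S) ^ τ := by
                refine mul_le_mul_of_nonneg_left ?_ hC0
                exact Real.rpow_le_rpow_of_exponent_le hy1 hτθ
            _ = C * (x ^ τ * ((w S) ^ τ)⁻¹) := by
                rw [Real.div_rpow hx0.le (hw0 S).le, div_eq_mul_inv]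
            _ ≤ C * (x ^ τ * (mnorm N (HF.ind S) : ℝ) ^ (-(3/2) : ℝ)) := by
                refine mul_le_mul_of_nonneg_left ?_ hC0
                refine mul_le_mul_of_nonneg_left ?_ (Real.rpow_pos_of_pos hx0 _).le
                rw [hw_eq]
                exact HF.rpow_w (hmn1 S) hh hτ34
            _ = C * x ^ τ * (mnorm N (HF.ind S) : ℝ) ^ (-(3/2) : ℝ) := by ring
      _ = C * x ^ τ * ∑ S ∈ Sx, (mnorm N (HF.ind S) : ℝ) ^ (-(3/2) : ℝ) := by
          rw [Finset.mul_sum]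
      _ ≤ C * x ^ τ * K3 := by
          refine mul_le_mul_of_nonneg_left ?_ ?_
          · exact Summable.sum_le_tsum Sx (fun S _ => hg0 S) hg
          · positivity
  -- assemble
  have hkey : ({m : P →₀ ℕ | (∀ p, m p ≤ h - 1) ∧ (mnorm N m : ℝ) ≤ x}.ncard : ℝ)
      - κ * K * x = κ * x * ((∑ S ∈ Sx, HF.gm N h S) - K) + ∑ S ∈ Sx, (-1:ℝ)^S.card * e S := by
    rw [hid', hsplit]; ring
  rw [hkey]
  have hx34 : x * x ^ (-(1/4):ℝ) = x ^ ((3/4):ℝ) := by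
    calc x * x ^ (-(1/4):ℝ) = x ^ (1:ℝ) * x ^ (-(1/4):ℝ) := by rw [Real.rpow_one]
    _ = x ^ ((1:ℝ) + -(1/4)) := (Real.rpow_add hx0 _ _).symm
    _ = x ^ ((3/4):ℝ) := by norm_num
  have hxτ : x ^ ((3/4):ℝ) ≤ x ^ τ := Real.rpow_le_rpow_of_exponent_le hx1 hτ34
  calc |κ * x * ((∑ S ∈ Sx, HF.gm N h S) - K) + ∑ S ∈ Sx, (-1:ℝ)^S.card * e S|
      ≤ |κ * x * ((∑ S ∈ Sx, HF.gm N h S) - K)| + |∑ S ∈ Sx, (-1:ℝ)^S.card * e S| :=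
        abs_add_le _ _
    _ ≤ κ * x * |K - ∑ S ∈ Sx, HF.gm N h S| + ∑ S ∈ Sx, |(-1:ℝ)^S.card * e S| := by
        refine add_le_add ?_ (Finset.abs_sum_le_sum_abs _ _)
        rw [abs_mul, abs_sub_comm]
        have : |κ * x| = κ * x := abs_of_nonneg (by positivity)
        rw [this]
    _ ≤ κ * x * (x ^ (-(1/4):ℝ) * K3) + C * x ^ τ * K3 := by
        refine add_le_add ?_ herr
        exact mul_le_mul_of_nonneg_left htail (by positivity)
    _ = κ * K3 * (x * x ^ (-(1/4):ℝ)) + C * K3 * x ^ τ := by ring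
    _ = κ * K3 * x ^ ((3/4):ℝ) + C * K3 * x ^ τ := by rw [hx34]
    _ ≤ κ * K3 * x ^ τ + C * K3 * x ^ τ := by
        refine add_le_add ?_ le_rfl
        exact mul_le_mul_of_nonneg_left hxτ (by positivity)
    _ = (κ * K3 + C * K3) * x ^ τ := by ring
end

section
/- Let k ≥ 1 and suppose the counting axiom holds. If N_k(x) denotes the set of k-full elements of norm at most x and (a_i) satisfies a_i ≪ B^i with 0 < B ≤ 2^{1/k − α} for some α > 0, then Σ_{m ∈ N_k(x)} Σ_{i ≥ k+1} |a_i| ω_i(m) = O(x^{1/k}). -/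
open Filter
open scoped ENNReal NNReal BigOperators

namespace KFA

variable {P : Type*}

theorem mnorm_zero (N : P → ℕ) : mnorm N 0 = 1 := by simp [mnorm]

theorem mnorm_add (N : P → ℕ) (m₁ m₂ : P →₀ ℕ) :
    mnorm N (m₁ + m₂) = mnorm N m₁ * mnorm N m₂ :=
  Finsupp.prod_add_index' (fun p => pow_zero _) (fun p a b => pow_add _ _ _)

theorem mnorm_single (N : P → ℕ) (p : P) (e : ℕ) :
    mnorm N (Finsupp.single p e) = N p ^ e :=
  Finsupp.prod_single_index (pow_zero _)

theorem mnorm_smul (N : P → ℕ) (n : ℕ) (m : P →₀ ℕ) :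
    mnorm N (n • m) = mnorm N m ^ n := by
  induction n with
  | zero => simp [mnorm_zero]
  | succ n ih => rw [succ_nsmul, mnorm_add, ih, pow_succ]

theorem mnorm_sum {ι : Type*} (N : P → ℕ) (F : Finset ι) (g : ι → P →₀ ℕ) :
    mnorm N (∑ i ∈ F, g i) = ∏ i ∈ F, mnorm N (g i) := by
  classical
  induction F using Finset.cons_induction with
  | empty => simp [mnorm_zero]
  | cons i F hi ih => rw [Finset.sum_cons, mnorm_add, ih, Finset.prod_cons]

theorem one_le_mnorm {N : P → ℕ} (hN : ∀ p, 1 < N p) (m : P →₀ ℕ) : 1 ≤ mnorm N m := by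
  refine Finset.one_le_prod' ?_
  intro p _
  exact Nat.one_le_pow _ _ (by have := hN p; omega)

theorem two_le_mnorm {N : P → ℕ} (hN : ∀ p, 1 < N p) {m : P →₀ ℕ} (hm : m ≠ 0) :
    2 ≤ mnorm N m := by
  obtain ⟨p, hp⟩ : ∃ p, m p ≠ 0 := by
    by_contra h
    push_neg at h
    exact hm (Finsupp.ext fun p => h p)
  calc 2 ≤ N p := hN p
    _ ≤ N p ^ m p := Nat.le_self_pow hp _
    _ ≤ N p ^ m p * mnorm N (m.erase p) :=
        Nat.le_mul_of_pos_right _ (lt_of_lt_of_le one_pos (one_le_mnorm hN _))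
    _ = mnorm N m := by
        rw [← mnorm_single N p (m p), ← mnorm_add, Finsupp.single_add_erase]

theorem count_le {N : P → ℕ} (hN : ∀ p, 1 < N p) {D : ℝ}
    (hD : ∀ t : ℝ, 1 ≤ t → {m : P →₀ ℕ | (mnorm N m : ℝ) ≤ t}.Finite ∧
      (({m : P →₀ ℕ | (mnorm N m : ℝ) ≤ t}.ncard : ℝ) ≤ D * t)) (t : ℝ) :
    ∑' m : P →₀ ℕ, Set.indicator {m | (mnorm N m : ℝ) ≤ t} (fun _ => (1 : ℝ≥0∞)) m
      ≤ ENNReal.ofReal (D * t) := by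
  rcases lt_or_ge t 1 with ht | ht
  · have hz : ∀ m : P →₀ ℕ,
        Set.indicator {m : P →₀ ℕ | (mnorm N m : ℝ) ≤ t} (fun _ => (1 : ℝ≥0∞)) m = 0 := by
      intro m
      apply Set.indicator_of_notMem
      intro hmem
      have h1 : (1 : ℝ) ≤ (mnorm N m : ℝ) := by exact_mod_cast one_le_mnorm hN m
      simp only [Set.mem_setOf_eq] at hmem
      linarith
    rw [tsum_congr hz, tsum_zero]
    exact zero_le
  · obtain ⟨hfin, hcard⟩ := hD t ht
    rw [← tsum_subtype]
    haveI := hfin.fintype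
    rw [tsum_fintype]
    simp only [Finset.sum_const, Finset.card_univ, nsmul_eq_mul, mul_one]
    have hcc : (Fintype.card {m : P →₀ ℕ | (mnorm N m : ℝ) ≤ t} : ℝ)
        = ({m : P →₀ ℕ | (mnorm N m : ℝ) ≤ t}.ncard : ℝ) := by
      rw [← Nat.card_coe_set_eq, Nat.card_eq_fintype_card]
    rw [← ENNReal.ofReal_natCast]
    exact ENNReal.ofReal_le_ofReal (by rw [hcc] at *; linarith)

/-- helper: `(c^n)^(1/k) = c^(n/k)` for `c ≥ 0`. -/
theorem pow_rpow_div (c : ℝ) (hc : 0 ≤ c) (n k : ℕ) :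
    ((c ^ n : ℝ)) ^ ((1 : ℝ) / (k : ℝ)) = c ^ ((n : ℝ) / (k : ℝ)) := by
  rw [← Real.rpow_natCast c n, ← Real.rpow_mul hc, mul_one_div]

/-- The dyadic zeta bound. -/
theorem zeta_le {N : P → ℕ} (hN : ∀ p, 1 < N p) {D : ℝ} (hD0 : 0 ≤ D)
    (hA : ∀ t : ℝ, ∑' m : P →₀ ℕ,
      Set.indicator {m | (mnorm N m : ℝ) ≤ t} (fun _ => (1 : ℝ≥0∞)) m
        ≤ ENNReal.ofReal (D * t))
    {ε s : ℝ} (hε : 0 < ε) (hs : 1 + ε ≤ s) :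
    ∑' u : P →₀ ℕ, Set.indicator {u : P →₀ ℕ | u ≠ 0}
        (fun u => ENNReal.ofReal ((mnorm N u : ℝ) ^ (-s))) u
      ≤ ENNReal.ofReal ((4 * D / (1 - 2 ^ (-ε))) * 2 ^ (-s)) := by
  classical
  set f : (P →₀ ℕ) → ℝ≥0∞ := fun u => Set.indicator {u : P →₀ ℕ | u ≠ 0}
      (fun u => ENNReal.ofReal ((mnorm N u : ℝ) ^ (-s))) u with hf
  have hs0 : 0 ≤ s := by linarith
  set g : (P →₀ ℕ) → ℕ := fun u => Nat.log 2 (mnorm N u) - 1 with hg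
  -- fiber decomposition
  have hsig : ∑' u, f u = ∑' (n : ℕ), ∑' (u : (g ⁻¹' {n} : Set (P →₀ ℕ))), f u.val := by
    rw [← (Equiv.sigmaFiberEquiv g).tsum_eq f]
    exact ENNReal.tsum_sigma' _
  rw [hsig]
  -- pointwise bound on fibers
  have hfiber : ∀ n : ℕ, ∀ u : (g ⁻¹' {n} : Set (P →₀ ℕ)),
      f u.val ≤ ENNReal.ofReal (((2 : ℝ) ^ (n + 1)) ^ (-s)) *
        Set.indicator {m : P →₀ ℕ | (mnorm N m : ℝ) ≤ (2 : ℝ) ^ (n + 2)}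
          (fun _ => (1 : ℝ≥0∞)) u.val := by
    intro n u
    by_cases hu : u.val = 0
    · rw [hf]
      simp [Set.indicator_of_notMem, hu]
    · have h2 : 2 ≤ mnorm N u.val := two_le_mnorm hN hu
      have hL1 : 1 ≤ Nat.log 2 (mnorm N u.val) :=
        (Nat.le_log_iff_pow_le one_lt_two (by omega)).mpr (by simpa using h2)
      have hLn : Nat.log 2 (mnorm N u.val) = n + 1 := by
        have h := u.2
        simp only [Set.mem_preimage, Set.mem_singleton_iff, hg] at h
        omega
      have hlow : 2 ^ (n + 1) ≤ mnorm N u.val := by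
        rw [← hLn]; exact Nat.pow_log_le_self 2 (by omega)
      have hhigh : mnorm N u.val < 2 ^ (n + 2) := by
        have := Nat.lt_pow_succ_log_self one_lt_two (mnorm N u.val)
        rwa [hLn] at this
      have hmem : u.val ∈ {m : P →₀ ℕ | (mnorm N m : ℝ) ≤ (2 : ℝ) ^ (n + 2)} := by
        simp only [Set.mem_setOf_eq]
        calc (mnorm N u.val : ℝ) ≤ ((2 ^ (n + 2) : ℕ) : ℝ) := by exact_mod_cast hhigh.le
          _ = (2 : ℝ) ^ (n + 2) := by push_cast; ring
      show Set.indicator {u : P →₀ ℕ | u ≠ 0}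
          (fun u => ENNReal.ofReal ((mnorm N u : ℝ) ^ (-s))) u.val ≤ _
      rw [Set.indicator_of_mem (show (u : P →₀ ℕ) ∈ {u : P →₀ ℕ | u ≠ 0} from hu),
        Set.indicator_of_mem hmem, mul_one]
      apply ENNReal.ofReal_le_ofReal
      have hposl : (0 : ℝ) < (2 : ℝ) ^ (n + 1) := by positivity
      have hcast : ((2 : ℝ) ^ (n + 1)) ≤ (mnorm N u.val : ℝ) := by
        calc ((2 : ℝ) ^ (n + 1)) = ((2 ^ (n + 1) : ℕ) : ℝ) := by push_cast; ring
          _ ≤ _ := by exact_mod_cast hlow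
      rw [Real.rpow_neg hposl.le, Real.rpow_neg (by positivity)]
      apply inv_anti₀ (Real.rpow_pos_of_pos hposl s)
      exact Real.rpow_le_rpow hposl.le hcast hs0
  -- fiber sums
  have hfibersum : ∀ n : ℕ, ∑' (u : (g ⁻¹' {n} : Set (P →₀ ℕ))), f u.val
      ≤ ENNReal.ofReal (((2 : ℝ) ^ (n + 1)) ^ (-s)) * ENNReal.ofReal (D * (2 : ℝ) ^ (n + 2)) := by
    intro n
    calc ∑' (u : (g ⁻¹' {n} : Set (P →₀ ℕ))), f u.val
        ≤ ∑' (u : (g ⁻¹' {n} : Set (P →₀ ℕ))),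
          ENNReal.ofReal (((2 : ℝ) ^ (n + 1)) ^ (-s)) *
            Set.indicator {m : P →₀ ℕ | (mnorm N m : ℝ) ≤ (2 : ℝ) ^ (n + 2)}
              (fun _ => (1 : ℝ≥0∞)) u.val := ENNReal.tsum_le_tsum (hfiber n)
      _ = ENNReal.ofReal (((2 : ℝ) ^ (n + 1)) ^ (-s)) *
          ∑' (u : (g ⁻¹' {n} : Set (P →₀ ℕ))),
            Set.indicator {m : P →₀ ℕ | (mnorm N m : ℝ) ≤ (2 : ℝ) ^ (n + 2)}
              (fun _ => (1 : ℝ≥0∞)) u.val := ENNReal.tsum_mul_left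
      _ ≤ ENNReal.ofReal (((2 : ℝ) ^ (n + 1)) ^ (-s)) * ENNReal.ofReal (D * (2 : ℝ) ^ (n + 2)) := by
          apply mul_le_mul_right
          calc ∑' (u : (g ⁻¹' {n} : Set (P →₀ ℕ))),
              Set.indicator {m : P →₀ ℕ | (mnorm N m : ℝ) ≤ (2 : ℝ) ^ (n + 2)}
                (fun _ => (1 : ℝ≥0∞)) u.val
              ≤ ∑' (u : P →₀ ℕ),
                Set.indicator {m : P →₀ ℕ | (mnorm N m : ℝ) ≤ (2 : ℝ) ^ (n + 2)}
                  (fun _ => (1 : ℝ≥0∞)) u :=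
                ENNReal.tsum_comp_le_tsum_of_injective Subtype.val_injective _
            _ ≤ _ := hA _
  -- numeric identity per n
  have hnum : ∀ n : ℕ, (((2 : ℝ) ^ (n + 1)) ^ (-s)) * (D * (2 : ℝ) ^ (n + 2))
      = (4 * D * (2 : ℝ) ^ (-s)) * ((2 : ℝ) ^ (1 - s)) ^ n := by
    intro n
    have h1 : ((2 : ℝ) ^ (n + 1) : ℝ) = (2 : ℝ) ^ ((n : ℝ) + 1) := by
      rw [← Real.rpow_natCast 2 (n + 1)]; push_cast; ring_nf
    have h2 : ((2 : ℝ) ^ (n + 2) : ℝ) = (2 : ℝ) ^ ((n : ℝ) + 2) := by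
      rw [← Real.rpow_natCast 2 (n + 2)]; push_cast; ring_nf
    have h3 : (((2 : ℝ) ^ (1 - s)) ^ n : ℝ) = (2 : ℝ) ^ ((1 - s) * n) := by
      rw [← Real.rpow_natCast ((2:ℝ) ^ (1 - s)) n, ← Real.rpow_mul (by norm_num)]
    have h4 : (4 : ℝ) = (2 : ℝ) ^ (2 : ℝ) := by
      rw [show (2:ℝ)^(2:ℝ) = (2:ℝ)^((2:ℕ):ℝ) by norm_num, Real.rpow_natCast]; norm_num
    rw [h1, h2, h3, ← Real.rpow_mul (by norm_num : (0:ℝ) ≤ 2)]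
    rw [show (((2:ℝ) ^ (((n:ℝ) + 1) * -s)) * (D * (2:ℝ) ^ ((n:ℝ) + 2)))
        = D * ((2:ℝ) ^ (((n:ℝ) + 1) * -s) * (2:ℝ) ^ ((n:ℝ) + 2)) by ring]
    rw [show ((4 * D * (2:ℝ) ^ (-s)) * (2:ℝ) ^ ((1 - s) * (n:ℝ)))
        = D * (4 * ((2:ℝ) ^ (-s) * (2:ℝ) ^ ((1 - s) * (n:ℝ)))) by ring]
    rw [← Real.rpow_add (by norm_num), h4, ← Real.rpow_add (by norm_num),
      ← Real.rpow_add (by norm_num)]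
    ring_nf
  calc ∑' (n : ℕ), ∑' (u : (g ⁻¹' {n} : Set (P →₀ ℕ))), f u.val
      ≤ ∑' (n : ℕ), ENNReal.ofReal ((4 * D * (2 : ℝ) ^ (-s)) * ((2 : ℝ) ^ (1 - s)) ^ n) := by
        apply ENNReal.tsum_le_tsum
        intro n
        calc ∑' (u : (g ⁻¹' {n} : Set (P →₀ ℕ))), f u.val
            ≤ _ := hfibersum n
          _ ≤ _ := by
              rw [← ENNReal.ofReal_mul (by positivity), hnum n]
    _ = ENNReal.ofReal (4 * D * (2 : ℝ) ^ (-s)) *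
          ∑' (n : ℕ), (ENNReal.ofReal ((2 : ℝ) ^ (1 - s))) ^ n := by
        rw [← ENNReal.tsum_mul_left]
        congr 1
        funext n
        rw [← ENNReal.ofReal_pow (by positivity), ← ENNReal.ofReal_mul (by positivity)]
    _ ≤ ENNReal.ofReal (4 * D * (2 : ℝ) ^ (-s)) * ENNReal.ofReal ((1 - 2 ^ (-ε))⁻¹) := by
        apply mul_le_mul_right
        rw [ENNReal.tsum_geometric]
        have hle : ENNReal.ofReal ((2 : ℝ) ^ (1 - s)) ≤ ENNReal.ofReal ((2 : ℝ) ^ (-ε)) :=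
          ENNReal.ofReal_le_ofReal
            (Real.rpow_le_rpow_of_exponent_le one_le_two (by linarith))
        have heps1 : (2 : ℝ) ^ (-ε) < 1 :=
          Real.rpow_lt_one_of_one_lt_of_neg one_lt_two (by linarith)
        calc (1 - ENNReal.ofReal ((2 : ℝ) ^ (1 - s)))⁻¹
            ≤ (1 - ENNReal.ofReal ((2 : ℝ) ^ (-ε)))⁻¹ :=
              ENNReal.inv_le_inv' (tsub_le_tsub_left hle 1)
          _ = ENNReal.ofReal ((1 - 2 ^ (-ε))⁻¹) := by
              rw [← ENNReal.ofReal_one, ← ENNReal.ofReal_sub _ (by positivity),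
                ← ENNReal.ofReal_inv_of_pos (by linarith)]
    _ ≤ ENNReal.ofReal ((4 * D / (1 - 2 ^ (-ε))) * 2 ^ (-s)) := by
        rw [← ENNReal.ofReal_mul (by positivity)]
        apply ENNReal.ofReal_le_ofReal
        rw [div_eq_mul_inv]
        ring_nf
        exact le_refl _

/-- Sum over all elements (including 0). -/
theorem Zall_le {N : P → ℕ} (hN : ∀ p, 1 < N p) {D : ℝ} (hD0 : 0 ≤ D)
    (hA : ∀ t : ℝ, ∑' m : P →₀ ℕ,
      Set.indicator {m | (mnorm N m : ℝ) ≤ t} (fun _ => (1 : ℝ≥0∞)) m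
        ≤ ENNReal.ofReal (D * t))
    {ε s : ℝ} (hε : 0 < ε) (hs : 1 + ε ≤ s) :
    ∑' u : P →₀ ℕ, ENNReal.ofReal ((mnorm N u : ℝ) ^ (-s))
      ≤ ENNReal.ofReal (1 + 4 * D / (1 - 2 ^ (-ε))) := by
  classical
  rw [ENNReal.tsum_eq_add_tsum_ite 0]
  have h0 : ENNReal.ofReal ((mnorm N (0 : P →₀ ℕ) : ℝ) ^ (-s)) = 1 := by
    have : mnorm N (0 : P →₀ ℕ) = 1 := by simp [mnorm]
    rw [this]
    simp [Real.one_rpow]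
  rw [h0]
  have hc0 : 0 ≤ 4 * D / (1 - 2 ^ (-ε)) := by
    apply div_nonneg (by linarith)
    have : (2 : ℝ) ^ (-ε) < 1 := Real.rpow_lt_one_of_one_lt_of_neg one_lt_two (by linarith)
    linarith
  refine le_trans (add_le_add_right (le_trans (ENNReal.tsum_le_tsum (fun u => ?_))
      (zeta_le hN hD0 hA hε hs)) 1) ?_
  · by_cases hu : u = 0 <;> simp [hu, Set.indicator]
  calc 1 + ENNReal.ofReal ((4 * D / (1 - 2 ^ (-ε))) * 2 ^ (-s))
      ≤ 1 + ENNReal.ofReal (4 * D / (1 - 2 ^ (-ε))) := by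
        apply add_le_add_right
        apply ENNReal.ofReal_le_ofReal
        calc (4 * D / (1 - 2 ^ (-ε))) * 2 ^ (-s) ≤ (4 * D / (1 - 2 ^ (-ε))) * 1 := by
              apply mul_le_mul_of_nonneg_left _ hc0
              exact Real.rpow_le_one_of_one_le_of_nonpos one_le_two (by linarith)
          _ = _ := mul_one _
    _ = ENNReal.ofReal (1 + 4 * D / (1 - 2 ^ (-ε))) := by
        rw [ENNReal.ofReal_add (by norm_num) hc0, ENNReal.ofReal_one]

/-- Sum over primes. -/
theorem Zp_le {N : P → ℕ} (hN : ∀ p, 1 < N p) {D : ℝ} (hD0 : 0 ≤ D)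
    (hA : ∀ t : ℝ, ∑' m : P →₀ ℕ,
      Set.indicator {m | (mnorm N m : ℝ) ≤ t} (fun _ => (1 : ℝ≥0∞)) m
        ≤ ENNReal.ofReal (D * t))
    {ε s : ℝ} (hε : 0 < ε) (hs : 1 + ε ≤ s) :
    ∑' p : P, ENNReal.ofReal ((N p : ℝ) ^ (-s))
      ≤ ENNReal.ofReal ((4 * D / (1 - 2 ^ (-ε))) * 2 ^ (-s)) := by
  refine le_trans ?_ (zeta_le hN hD0 hA hε hs)
  apply ENNReal.summable.tsum_le_tsum_of_inj (fun p : P => Finsupp.single p 1)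
    (Finsupp.single_left_injective one_ne_zero) (fun _ _ => zero_le) ?_
    ENNReal.summable
  intro p
  have hne : Finsupp.single p 1 ≠ (0 : P →₀ ℕ) := by
    intro h
    have := DFunLike.congr_fun h p
    simp at this
  rw [Set.indicator_of_mem (show Finsupp.single p 1 ∈ {u : P →₀ ℕ | u ≠ 0} from hne)]
  have : mnorm N (Finsupp.single p 1) = N p := by
    rw [show mnorm N (Finsupp.single p 1) = N p ^ 1 from
      Finsupp.prod_single_index (pow_zero _), pow_one]
  rw [this]

/-- tsum over tuples factorizes. -/
theorem tsum_pi_prod : ∀ (n : ℕ) (F : Fin n → (P →₀ ℕ) → ℝ≥0∞),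
    ∑' s : Fin n → (P →₀ ℕ), ∏ v, F v (s v) = ∏ v, ∑' u, F v u := by
  intro n
  induction n with
  | zero =>
    intro F
    have h1 : ∀ s : Fin 0 → (P →₀ ℕ), (∏ v, F v (s v)) = 1 := fun s => by simp
    rw [tsum_congr h1,
      tsum_eq_single (default : Fin 0 → (P →₀ ℕ))
        (fun s hs => absurd (Subsingleton.elim s default) hs)]
    simp
  | succ n ih =>
    intro F
    have he := (Fin.consEquiv (fun _ : Fin (n + 1) => (P →₀ ℕ))).tsum_eq
      (fun s : Fin (n + 1) → (P →₀ ℕ) => ∏ v, F v (s v))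
    rw [← he, ENNReal.tsum_prod']
    have hin : ∀ (a : P →₀ ℕ) (s : Fin n → (P →₀ ℕ)),
        (∏ v, F v ((Fin.consEquiv (fun _ : Fin (n+1) => (P →₀ ℕ))) (a, s) v))
        = F 0 a * ∏ v : Fin n, F v.succ (s v) := by
      intro a s
      rw [Fin.prod_univ_succ]
      simp [Fin.consEquiv]
    calc ∑' (a : P →₀ ℕ) (s : Fin n → (P →₀ ℕ)),
          (∏ v, F v ((Fin.consEquiv (fun _ : Fin (n+1) => (P →₀ ℕ))) (a, s) v))
        = ∑' (a : P →₀ ℕ), F 0 a * ∑' (s : Fin n → (P →₀ ℕ)), ∏ v : Fin n, F v.succ (s v) := by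
          apply tsum_congr; intro a
          rw [tsum_congr (hin a), ENNReal.tsum_mul_left]
      _ = (∑' u, F 0 u) * ∑' (s : Fin n → (P →₀ ℕ)), ∏ v : Fin n, F v.succ (s v) :=
          ENNReal.tsum_mul_right
      _ = ∏ v, ∑' u, F v u := by
          rw [ih (fun v => F v.succ), Fin.prod_univ_succ]

/-- geometric series bound. -/
theorem tsum_geom_ofReal {q : ℝ} (h0 : 0 ≤ q) (h1 : q < 1) :
    ∑' j : ℕ, ENNReal.ofReal (q ^ j) ≤ ENNReal.ofReal ((1 - q)⁻¹) := by
  have : ∀ j : ℕ, ENNReal.ofReal (q ^ j) = (ENNReal.ofReal q) ^ j := by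
    intro j; rw [ENNReal.ofReal_pow h0]
  rw [tsum_congr this, ENNReal.tsum_geometric]
  rw [← ENNReal.ofReal_one, ← ENNReal.ofReal_sub _ h0,
    ← ENNReal.ofReal_inv_of_pos (by linarith)]

/-- the `a`-part of the decomposition of a `k`-full element. -/
noncomputable def apart (k : ℕ) (m : P →₀ ℕ) : P →₀ ℕ :=
  Finsupp.onFinset m.support (fun q => if m q % k = 0 then m q / k else m q / k - 1)
    (fun q hq => Finsupp.mem_support_iff.2 (fun h0 => hq (by simp [h0])))

/-- the `s_v`-part of the decomposition of a `k`-full element. -/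
noncomputable def spart (k v : ℕ) (m : P →₀ ℕ) : P →₀ ℕ :=
  Finsupp.onFinset m.support (fun q => if m q % k = v + 1 then 1 else 0)
    (fun q hq => Finsupp.mem_support_iff.2 (fun h0 => hq (by simp [h0])))

theorem decomp {k : ℕ} (hk : 1 ≤ k) (m : P →₀ ℕ) (hfull : ∀ q, m q = 0 ∨ k ≤ m q) :
    (k • apart k m) + ∑ v ∈ Finset.range (k - 1), (k + 1 + v) • spart k v m = m := by
  classical
  ext q
  rw [Finsupp.add_apply, Finsupp.smul_apply, Finsupp.finset_sum_apply]
  simp only [Finsupp.smul_apply, apart, spart, Finsupp.onFinset_apply, smul_eq_mul]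
  rcases hfull q with h0 | hge
  · simp [h0]
  · have hk0 : 0 < k := hk
    have hdm : k * (m q / k) + m q % k = m q := Nat.div_add_mod (m q) k
    rcases Nat.eq_zero_or_pos (m q % k) with hr | hr
    · have hz : ∑ v ∈ Finset.range (k - 1), (k + 1 + v) * (if m q % k = v + 1 then 1 else 0)
          = 0 := Finset.sum_eq_zero (fun v _ => by rw [hr]; simp)
      rw [if_pos hr, hz, add_zero]
      omega
    · have hrk : m q % k < k := Nat.mod_lt _ hk0
      have hd1 : 1 ≤ m q / k := (Nat.one_le_div_iff hk0).2 hge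
      have hsum : ∑ v ∈ Finset.range (k - 1), (k + 1 + v) * (if m q % k = v + 1 then 1 else 0)
          = k + m q % k := by
        have hc : ∀ v ∈ Finset.range (k - 1),
            (k + 1 + v) * (if m q % k = v + 1 then 1 else 0)
            = if v = m q % k - 1 then k + 1 + v else 0 := by
          intro v _
          by_cases hv : m q % k = v + 1
          · rw [if_pos hv, if_pos (by omega), mul_one]
          · rw [if_neg hv, if_neg (by omega), mul_zero]
        rw [Finset.sum_congr rfl hc,
          Finset.sum_ite_eq' (Finset.range (k - 1)) (m q % k - 1) (fun v => k + 1 + v),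
          if_pos (Finset.mem_range.2 (by omega))]
        omega
      rw [if_neg (by omega), hsum]
      have hmul : k * (m q / k - 1) = k * (m q / k) - k := by rw [Nat.mul_sub, mul_one]
      rw [hmul]
      have hK : k ≤ k * (m q / k) := by
        calc k = k * 1 := (mul_one k).symm
          _ ≤ k * (m q / k) := Nat.mul_le_mul_left k hd1
      omega

open Classical in
/-- The weight function on the codomain of the injection. -/
noncomputable def Vfun (N : P → ℕ) (k : ℕ) (B x : ℝ) :
    ℕ × P × (Fin (k - 1) → (P →₀ ℕ)) × (P →₀ ℕ) → ℝ≥0∞ := fun y =>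
  if (k + 1 ≤ y.1 ∧ ((mnorm N y.2.2.2 : ℝ)) ^ k *
      (((N y.2.1 : ℝ)) ^ y.1 *
        ∏ v : Fin (k - 1), ((mnorm N (y.2.2.1 v) : ℝ)) ^ (k + 1 + (v : ℕ))) ≤ x)
  then ENNReal.ofReal (B ^ y.1) else 0

/-- The injection step: domain sum is at most the codomain sum. -/
theorem dom_le_V {N : P → ℕ} (hN : ∀ p, 1 < N p) {k : ℕ} (hk : 1 ≤ k) (B x : ℝ) :
    ∑' y : (P →₀ ℕ) × P,
      Set.indicator {y : (P →₀ ℕ) × P | (∀ q, y.1 q = 0 ∨ k ≤ y.1 q) ∧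
          ((mnorm N y.1 : ℝ) ≤ x) ∧ (k + 1 ≤ y.1 y.2)}
        (fun y => ENNReal.ofReal (B ^ (y.1 y.2))) y
      ≤ ∑' y : ℕ × P × (Fin (k - 1) → (P →₀ ℕ)) × (P →₀ ℕ), Vfun N k B x y := by
  classical
  set Dset : Set ((P →₀ ℕ) × P) := {y : (P →₀ ℕ) × P | (∀ q, y.1 q = 0 ∨ k ≤ y.1 q) ∧
      ((mnorm N y.1 : ℝ) ≤ x) ∧ (k + 1 ≤ y.1 y.2)} with hDset
  rw [← tsum_subtype Dset (fun y => ENNReal.ofReal (B ^ (y.1 y.2)))]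
  -- the injection
  set ι : Dset → ℕ × P × (Fin (k - 1) → (P →₀ ℕ)) × (P →₀ ℕ) := fun d =>
    (d.1.1 d.1.2, d.1.2, fun v => spart k (v : ℕ) (d.1.1.erase d.1.2),
      apart k (d.1.1.erase d.1.2)) with hι
  -- erased element is k-full
  have herasefull : ∀ (d : Dset), ∀ q, (d.1.1.erase d.1.2) q = 0 ∨ k ≤ (d.1.1.erase d.1.2) q := by
    intro d q
    rcases eq_or_ne q d.1.2 with h | h
    · left; rw [h, Finsupp.erase_same]
    · rw [Finsupp.erase_ne h]; exact d.2.1 q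
  -- reconstruction
  have hrec : ∀ (d : Dset), d.1.1 =
      Finsupp.single d.1.2 (d.1.1 d.1.2) + ((k • apart k (d.1.1.erase d.1.2)) +
        ∑ v ∈ Finset.range (k - 1), (k + 1 + v) • spart k v (d.1.1.erase d.1.2)) := by
    intro d
    rw [decomp hk _ (herasefull d), Finsupp.single_add_erase]
  have hinj : Function.Injective ι := by
    intro d₁ d₂ h
    rw [hι] at h
    simp only [Prod.mk.injEq] at h
    obtain ⟨hj, hp, hs, ha⟩ := h
    have hsv : ∀ v ∈ Finset.range (k - 1),
        spart k v (d₁.1.1.erase d₁.1.2) = spart k v (d₂.1.1.erase d₂.1.2) := by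
      intro v hv
      have := congr_fun hs ⟨v, Finset.mem_range.1 hv⟩
      simpa using this
    apply Subtype.ext
    apply Prod.ext _ hp
    rw [hrec d₁, hrec d₂, hj, hp]
    rw [hp] at ha hsv
    rw [ha, Finset.sum_congr rfl (fun v hv => by rw [hsv v hv])]
  -- pointwise bound
  have hle : ∀ d : Dset, ENNReal.ofReal (B ^ (d.1.1 d.1.2)) ≤ Vfun N k B x (ι d) := by
    intro d
    have hnorm : mnorm N d.1.1 = N d.1.2 ^ (d.1.1 d.1.2) *
        (mnorm N (apart k (d.1.1.erase d.1.2)) ^ k *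
          ∏ v : Fin (k - 1), mnorm N (spart k (v : ℕ) (d.1.1.erase d.1.2)) ^ (k + 1 + (v : ℕ))) := by
      conv_lhs => rw [hrec d]
      rw [mnorm_add, mnorm_single, mnorm_add, mnorm_smul, mnorm_sum]
      congr 1
      congr 1
      rw [Finset.prod_congr rfl (fun v _ => mnorm_smul N (k + 1 + v) _),
        ← Fin.prod_univ_eq_prod_range (fun v => mnorm N (spart k v (d.1.1.erase d.1.2)) ^ (k + 1 + v)) (k - 1)]
    have hcond : k + 1 ≤ (ι d).1 ∧ ((mnorm N (ι d).2.2.2 : ℝ)) ^ k *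
        (((N (ι d).2.1 : ℝ)) ^ (ι d).1 *
          ∏ v : Fin (k - 1), ((mnorm N ((ι d).2.2.1 v) : ℝ)) ^ (k + 1 + (v : ℕ))) ≤ x := by
      constructor
      · exact d.2.2.2
      · have hx := d.2.2.1
        rw [hι]
        calc ((mnorm N (apart k (d.1.1.erase d.1.2)) : ℝ)) ^ k *
              (((N d.1.2 : ℝ)) ^ (d.1.1 d.1.2) *
                ∏ v : Fin (k - 1),
                  ((mnorm N (spart k (v : ℕ) (d.1.1.erase d.1.2)) : ℝ)) ^ (k + 1 + (v : ℕ)))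
            = (mnorm N d.1.1 : ℝ) := by
              rw [hnorm]; push_cast; ring
          _ ≤ x := hx
    rw [Vfun, if_pos hcond]

  exact ENNReal.summable.tsum_le_tsum_of_inj ι hinj (fun _ _ => zero_le) hle
    ENNReal.summable

/-- master bound for the codomain sum. -/
theorem master {N : P → ℕ} (hN : ∀ p, 1 < N p) {k : ℕ} (hk : 1 ≤ k) {D : ℝ} (hD0 : 0 ≤ D)
    (hA : ∀ t : ℝ, ∑' m : P →₀ ℕ,
      Set.indicator {m | (mnorm N m : ℝ) ≤ t} (fun _ => (1 : ℝ≥0∞)) m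
        ≤ ENNReal.ofReal (D * t))
    {B x α : ℝ} (hα : 0 < α) (hB0 : 0 < B) (hB2 : B ≤ (2 : ℝ) ^ (1 / (k : ℝ) - α))
    (hx : 0 ≤ x) {ε c₀ : ℝ} (hεdef : ε = 1 / (k : ℝ)) (hc₀def : c₀ = 4 * D / (1 - 2 ^ (-ε))) :
    ∑' y : ℕ × P × (Fin (k - 1) → (P →₀ ℕ)) × (P →₀ ℕ), Vfun N k B x y
      ≤ (ENNReal.ofReal (D * x ^ (1 / (k : ℝ))) * ENNReal.ofReal (1 + c₀) ^ (k - 1)) *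
          (ENNReal.ofReal c₀ * ENNReal.ofReal ((1 - 2 ^ (-α))⁻¹)) := by
  classical
  have hkR : (0 : ℝ) < (k : ℝ) := by exact_mod_cast hk
  have hε0 : 0 < ε := by rw [hεdef]; positivity
  have h2ε : (2 : ℝ) ^ (-ε) < 1 := Real.rpow_lt_one_of_one_lt_of_neg one_lt_two (by linarith)
  have hc₀0 : 0 ≤ c₀ := by rw [hc₀def]; apply div_nonneg (by linarith); linarith
  -- abbreviations
  set Wj : ℕ → ℝ≥0∞ := fun j => if k + 1 ≤ j then ENNReal.ofReal (B ^ j) else 0 with hWj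
  set Kx : ℝ≥0∞ := ENNReal.ofReal (D * x ^ (1 / (k : ℝ))) with hKx
  set Wp : ℕ → P → ℝ≥0∞ := fun j p =>
    ENNReal.ofReal ((N p : ℝ) ^ (-((j : ℝ) / (k : ℝ)))) with hWp
  set Ws : Fin (k - 1) → (P →₀ ℕ) → ℝ≥0∞ := fun v u =>
    ENNReal.ofReal ((mnorm N u : ℝ) ^ (-(((k + 1 + (v : ℕ) : ℕ) : ℝ) / (k : ℝ)))) with hWs
  set M : ℝ≥0∞ := ENNReal.ofReal (1 + c₀) ^ (k - 1) with hM
  -- Step A: innermost sum over `a`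
  have stepA : ∀ (j : ℕ) (p : P) (s : Fin (k - 1) → (P →₀ ℕ)),
      ∑' a : P →₀ ℕ, Vfun N k B x (j, p, s, a)
        ≤ Wj j * Kx * Wp j p * ∏ v, Ws v (s v) := by
    intro j p s
    set R : ℝ := ((N p : ℝ)) ^ j *
      ∏ v : Fin (k - 1), ((mnorm N (s v) : ℝ)) ^ (k + 1 + (v : ℕ)) with hR
    have hNp1 : (1 : ℝ) ≤ (N p : ℝ) := by
      have := hN p; exact_mod_cast this.le
    have hR1 : (1 : ℝ) ≤ R := by
      rw [hR]
      have h1 : (1 : ℝ) ≤ ((N p : ℝ)) ^ j := one_le_pow₀ hNp1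
      have h2 : (1 : ℝ) ≤ ∏ v : Fin (k - 1), ((mnorm N (s v) : ℝ)) ^ (k + 1 + (v : ℕ)) := by
        have := Finset.prod_le_prod (s := (Finset.univ : Finset (Fin (k - 1))))
          (f := fun _ => (1 : ℝ))
          (g := fun v => ((mnorm N (s v) : ℝ)) ^ (k + 1 + (v : ℕ)))
          (fun i _ => zero_le_one)
          (fun i _ => one_le_pow₀ (by exact_mod_cast one_le_mnorm hN (s i)))
        simpa using this
      nlinarith
    have hR0 : (0 : ℝ) < R := by linarith
    set t : ℝ := (x / R) ^ ((1 : ℝ) / (k : ℝ)) with ht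
    have hpoint : ∀ a : P →₀ ℕ, Vfun N k B x (j, p, s, a)
        ≤ Wj j * Set.indicator {m : P →₀ ℕ | (mnorm N m : ℝ) ≤ t} (fun _ => (1 : ℝ≥0∞)) a := by
      intro a
      rw [Vfun]
      simp only []
      split_ifs with hcnd
      · obtain ⟨hj, hle⟩ := hcnd
        have hmem : a ∈ {m : P →₀ ℕ | (mnorm N m : ℝ) ≤ t} := by
          simp only [Set.mem_setOf_eq, ht]
          have hdiv : ((mnorm N a : ℝ)) ^ k ≤ x / R := (le_div_iff₀ hR0).2 (by
            calc ((mnorm N a : ℝ)) ^ k * R = _ := by rw [hR]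
              _ ≤ x := hle)
          have hcast0 : (0 : ℝ) ≤ (mnorm N a : ℝ) := by positivity
          calc (mnorm N a : ℝ) = (((mnorm N a : ℝ)) ^ k) ^ ((1 : ℝ) / (k : ℝ)) := by
                rw [pow_rpow_div _ hcast0, div_self (ne_of_gt hkR), Real.rpow_one]
            _ ≤ (x / R) ^ ((1 : ℝ) / (k : ℝ)) :=
                Real.rpow_le_rpow (by positivity) hdiv (by positivity)
        rw [Set.indicator_of_mem hmem, mul_one]
        simp only [hWj]
        rw [if_pos hj]
      · exact zero_le
    have hsplit : ENNReal.ofReal (D * t) = Kx * Wp j p * ∏ v, Ws v (s v) := by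
      have hprodnn : ∀ v : Fin (k - 1), (0 : ℝ) ≤ ((mnorm N (s v) : ℝ)) ^ (k + 1 + (v : ℕ)) :=
        fun v => by positivity
      have hNp0 : (0 : ℝ) < (N p : ℝ) := by linarith
      have hRroot : R ^ ((1 : ℝ) / (k : ℝ)) = (N p : ℝ) ^ ((j : ℝ) / (k : ℝ)) *
          ∏ v : Fin (k - 1), ((mnorm N (s v) : ℝ)) ^ ((((k + 1 + (v : ℕ) : ℕ)) : ℝ) / (k : ℝ)) := by
        rw [hR, Real.mul_rpow (by positivity) (Finset.prod_nonneg (fun v _ => hprodnn v)),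
          pow_rpow_div _ hNp0.le,
          ← Real.finset_prod_rpow _ _ (fun v _ => hprodnn v)]
        congr 1
        apply Finset.prod_congr rfl
        intro v _
        exact pow_rpow_div _ (by positivity) _ _
      have htid : D * t = (D * x ^ ((1 : ℝ) / (k : ℝ))) *
          ((N p : ℝ) ^ (-((j : ℝ) / (k : ℝ)))) *
          ∏ v : Fin (k - 1), ((mnorm N (s v) : ℝ)) ^ (-((((k + 1 + (v : ℕ) : ℕ)) : ℝ) / (k : ℝ))) := by
        rw [ht, Real.div_rpow hx hR0.le, hRroot]
        rw [Real.rpow_neg hNp0.le]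
        rw [Finset.prod_congr rfl (fun v (_ : v ∈ Finset.univ) =>
          Real.rpow_neg (by positivity : (0:ℝ) ≤ (mnorm N (s v) : ℝ))
            ((((k + 1 + (v : ℕ) : ℕ)) : ℝ) / (k : ℝ)))]
        rw [Finset.prod_inv_distrib, div_eq_mul_inv, mul_inv]
        ring
      rw [htid]
      simp only [hKx, hWp, hWs]
      rw [ENNReal.ofReal_mul (by positivity), ENNReal.ofReal_mul (by positivity)]
      congr 1
      rw [ENNReal.ofReal_prod_of_nonneg]
      intro v _
      positivity
    calc ∑' a : P →₀ ℕ, Vfun N k B x (j, p, s, a)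
        ≤ ∑' a : P →₀ ℕ, Wj j *
            Set.indicator {m : P →₀ ℕ | (mnorm N m : ℝ) ≤ t} (fun _ => (1 : ℝ≥0∞)) a :=
          ENNReal.tsum_le_tsum hpoint
      _ = Wj j * ∑' a : P →₀ ℕ,
            Set.indicator {m : P →₀ ℕ | (mnorm N m : ℝ) ≤ t} (fun _ => (1 : ℝ≥0∞)) a :=
          ENNReal.tsum_mul_left
      _ ≤ Wj j * ENNReal.ofReal (D * t) := mul_le_mul_right (hA t) _
      _ = Wj j * (Kx * Wp j p * ∏ v, Ws v (s v)) := by rw [hsplit]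
      _ = Wj j * Kx * Wp j p * ∏ v, Ws v (s v) := by ring
  -- Step B: sum over s
  have stepB : ∀ (j : ℕ) (p : P),
      ∑' s : Fin (k - 1) → (P →₀ ℕ), (Wj j * Kx * Wp j p * ∏ v, Ws v (s v))
        ≤ Wj j * Kx * Wp j p * M := by
    intro j p
    rw [ENNReal.tsum_mul_left]
    apply mul_le_mul_right
    rw [tsum_pi_prod]
    rw [hM]
    calc ∏ v : Fin (k - 1), ∑' u, Ws v u
        ≤ ∏ _v : Fin (k - 1), ENNReal.ofReal (1 + c₀) := by
          apply Finset.prod_le_prod'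
          intro v _
          simp only [hWs, hc₀def]
          apply Zall_le hN hD0 hA hε0
          have hkv : (1 : ℝ) + ε ≤ (((k + 1 + (v : ℕ) : ℕ)) : ℝ) / (k : ℝ) := by
            rw [hεdef, le_div_iff₀ hkR]
            have hv0 : (0 : ℝ) ≤ ((v : ℕ) : ℝ) := by positivity
            have : (1 + 1 / (k : ℝ)) * (k : ℝ) = (k : ℝ) + 1 := by field_simp
            push_cast
            rw [this]
            linarith
          exact hkv
      _ = ENNReal.ofReal (1 + c₀) ^ (k - 1) := by
          rw [Finset.prod_const, Finset.card_univ, Fintype.card_fin]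
  -- Step C: sum over p
  have stepC : ∀ j : ℕ,
      ∑' p : P, (Wj j * Kx * Wp j p * M)
        ≤ Wj j * ENNReal.ofReal (c₀ * 2 ^ (-((j : ℝ) / (k : ℝ)))) * Kx * M := by
    intro j
    by_cases hj : k + 1 ≤ j
    · have hre : ∀ p : P, Wj j * Kx * Wp j p * M = (Wj j * Kx * M) * Wp j p := by
        intro p; ring
      rw [tsum_congr hre, ENNReal.tsum_mul_left]
      have hzp : ∑' p : P, Wp j p ≤ ENNReal.ofReal (c₀ * 2 ^ (-((j : ℝ) / (k : ℝ)))) := by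
        simp only [hWp, hc₀def]
        apply Zp_le hN hD0 hA hε0
        rw [hεdef, le_div_iff₀ hkR]
        have : (1 + 1 / (k : ℝ)) * (k : ℝ) = (k : ℝ) + 1 := by field_simp
        rw [this]
        exact_mod_cast (by exact_mod_cast hj : ((k + 1 : ℕ) : ℝ) ≤ (j : ℝ))
      calc (Wj j * Kx * M) * ∑' p : P, Wp j p
          ≤ (Wj j * Kx * M) * ENNReal.ofReal (c₀ * 2 ^ (-((j : ℝ) / (k : ℝ)))) :=
            mul_le_mul_right hzp _
        _ = Wj j * ENNReal.ofReal (c₀ * 2 ^ (-((j : ℝ) / (k : ℝ)))) * Kx * M := by ring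
    · have h0 : Wj j = 0 := by simp only [hWj]; rw [if_neg hj]
      have hz : ∀ p : P, Wj j * Kx * Wp j p * M = 0 := by
        intro p; simp [h0]
      rw [tsum_congr hz, tsum_zero, h0]
      simp
  -- Step D: sum over j
  have stepD : ∑' j : ℕ, (Wj j * ENNReal.ofReal (c₀ * 2 ^ (-((j : ℝ) / (k : ℝ)))) * Kx * M)
      ≤ (Kx * M) * (ENNReal.ofReal c₀ * ENNReal.ofReal ((1 - 2 ^ (-α))⁻¹)) := by
    have hpt : ∀ j : ℕ, Wj j * ENNReal.ofReal (c₀ * 2 ^ (-((j : ℝ) / (k : ℝ))))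
        ≤ ENNReal.ofReal c₀ * ENNReal.ofReal (((2 : ℝ) ^ (-α)) ^ j) := by
      intro j
      simp only [hWj]
      split_ifs with hj
      · rw [← ENNReal.ofReal_mul (by positivity), ← ENNReal.ofReal_mul hc₀0]
        apply ENNReal.ofReal_le_ofReal
        have h2j : (2 : ℝ) ^ (-((j : ℝ) / (k : ℝ))) = ((2 : ℝ) ^ (-(1 / (k : ℝ)))) ^ j := by
          rw [← Real.rpow_natCast ((2 : ℝ) ^ (-(1 / (k : ℝ)))) j, ← Real.rpow_mul (by norm_num)]
          congr 1
          field_simp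
        have hBb : B * (2 : ℝ) ^ (-(1 / (k : ℝ))) ≤ (2 : ℝ) ^ (-α) := by
          calc B * (2 : ℝ) ^ (-(1 / (k : ℝ)))
              ≤ (2 : ℝ) ^ (1 / (k : ℝ) - α) * (2 : ℝ) ^ (-(1 / (k : ℝ))) := by
                apply mul_le_mul_of_nonneg_right hB2 (by positivity)
            _ = (2 : ℝ) ^ (-α) := by
                rw [← Real.rpow_add (by norm_num)]
                congr 1
                ring
        calc B ^ j * (c₀ * 2 ^ (-((j : ℝ) / (k : ℝ))))
            = c₀ * (B * (2 : ℝ) ^ (-(1 / (k : ℝ)))) ^ j := by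
              rw [h2j, mul_pow]; ring
          _ ≤ c₀ * ((2 : ℝ) ^ (-α)) ^ j := by
              apply mul_le_mul_of_nonneg_left _ hc₀0
              apply pow_le_pow_left₀ (by positivity) hBb _
      · simp
    calc ∑' j : ℕ, (Wj j * ENNReal.ofReal (c₀ * 2 ^ (-((j : ℝ) / (k : ℝ)))) * Kx * M)
        ≤ ∑' j : ℕ, (Kx * M * ENNReal.ofReal c₀) * ENNReal.ofReal (((2 : ℝ) ^ (-α)) ^ j) := by
          apply ENNReal.tsum_le_tsum
          intro j
          calc Wj j * ENNReal.ofReal (c₀ * 2 ^ (-((j : ℝ) / (k : ℝ)))) * Kx * M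
              = (Wj j * ENNReal.ofReal (c₀ * 2 ^ (-((j : ℝ) / (k : ℝ))))) * (Kx * M) := by ring
            _ ≤ (ENNReal.ofReal c₀ * ENNReal.ofReal (((2 : ℝ) ^ (-α)) ^ j)) * (Kx * M) :=
                mul_le_mul_left (hpt j) _
            _ = (Kx * M * ENNReal.ofReal c₀) * ENNReal.ofReal (((2 : ℝ) ^ (-α)) ^ j) := by ring
      _ = (Kx * M * ENNReal.ofReal c₀) * ∑' j : ℕ, ENNReal.ofReal (((2 : ℝ) ^ (-α)) ^ j) :=
          ENNReal.tsum_mul_left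
      _ ≤ (Kx * M * ENNReal.ofReal c₀) * ENNReal.ofReal ((1 - 2 ^ (-α))⁻¹) := by
          apply mul_le_mul_right
          exact tsum_geom_ofReal (by positivity)
            (Real.rpow_lt_one_of_one_lt_of_neg one_lt_two (by linarith))
      _ = (Kx * M) * (ENNReal.ofReal c₀ * ENNReal.ofReal ((1 - 2 ^ (-α))⁻¹)) := by ring
  -- assemble
  calc ∑' y : ℕ × P × (Fin (k - 1) → (P →₀ ℕ)) × (P →₀ ℕ), Vfun N k B x y
      = ∑' (j : ℕ), ∑' (z : P × (Fin (k - 1) → (P →₀ ℕ)) × (P →₀ ℕ)), Vfun N k B x (j, z) :=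
        ENNReal.tsum_prod'
    _ = ∑' (j : ℕ) (p : P), ∑' (w : (Fin (k - 1) → (P →₀ ℕ)) × (P →₀ ℕ)),
          Vfun N k B x (j, p, w) := by
        apply tsum_congr; intro j
        exact ENNReal.tsum_prod'
    _ = ∑' (j : ℕ) (p : P) (s : Fin (k - 1) → (P →₀ ℕ)) (a : P →₀ ℕ),
          Vfun N k B x (j, p, s, a) := by
        apply tsum_congr; intro j
        apply tsum_congr; intro p
        exact ENNReal.tsum_prod'
    _ ≤ ∑' (j : ℕ), (Wj j * ENNReal.ofReal (c₀ * 2 ^ (-((j : ℝ) / (k : ℝ)))) * Kx * M) := by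
        apply ENNReal.tsum_le_tsum; intro j
        refine le_trans (ENNReal.tsum_le_tsum (fun p => ?_)) (stepC j)
        refine le_trans (ENNReal.tsum_le_tsum (fun s => ?_)) (stepB j p)
        exact stepA j p s
    _ ≤ (Kx * M) * (ENNReal.ofReal c₀ * ENNReal.ofReal ((1 - 2 ^ (-α))⁻¹)) := stepD
    _ = (Kx * M) * (ENNReal.ofReal c₀ * ENNReal.ofReal ((1 - 2 ^ (-α))⁻¹)) := rfl

end KFA

/-- Under the counting axiom, if `(a_i)` satisfies `a_i ≪ B^i` with
`0 < B ≤ 2^{1/k − α}` for some `α > 0`, then over the `k`-full elements `m` of norm at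
most `x`, `∑_m ∑_{i ≥ k+1} |a_i| ω_i(m) = O(x^{1/k})`. -/
theorem kfull_tail_omega_sum_bound {P : Type*} [Countable P]
    (N : P → ℕ) (hN : ∀ p, 1 < N p) (k : ℕ) (hk : 1 ≤ k)
    (κ : ℝ) (hκ : 0 < κ) (θ : ℝ) (hθ0 : 0 ≤ θ) (hθ1 : θ < 1) (C : ℝ)
    (hcount : ∀ x : ℝ, 1 ≤ x →
      {m : P →₀ ℕ | (mnorm N m : ℝ) ≤ x}.Finite ∧
      |({m : P →₀ ℕ | (mnorm N m : ℝ) ≤ x}.ncard : ℝ) - κ * x| ≤ C * x ^ θ)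
    (a : ℕ → ℂ) (Ca B α : ℝ) (hα : 0 < α) (hB0 : 0 < B)
    (hB2 : B ≤ (2 : ℝ) ^ (1 / (k : ℝ) - α))
    (i₀ : ℕ) (ha : ∀ i, i₀ ≤ i → ‖a i‖ ≤ Ca * B ^ i) :
    ∃ E : ℝ, ∀ x : ℝ, 2 ≤ x →
      ∑' m : {m : P →₀ ℕ | (∀ p, m p = 0 ∨ k ≤ m p) ∧ (mnorm N m : ℝ) ≤ x},
        ∑' i : ℕ, ‖a (i + (k + 1))‖
          * (((m.1).support.filter fun p => m.1 p = i + (k + 1)).card : ℝ)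
      ≤ E * x ^ (1 / (k : ℝ)) := by
  classical
  -- the counting constant
  have hC0 : 0 ≤ C := by
    have h := (hcount 1 le_rfl).2
    rw [Real.one_rpow, mul_one, mul_one] at h
    have := abs_nonneg (({m : P →₀ ℕ | (mnorm N m : ℝ) ≤ 1}.ncard : ℝ) - κ)
    linarith
  set D : ℝ := κ + C with hDdef
  have hD0 : 0 ≤ D := by rw [hDdef]; linarith
  have hD : ∀ t : ℝ, 1 ≤ t → {m : P →₀ ℕ | (mnorm N m : ℝ) ≤ t}.Finite ∧
      (({m : P →₀ ℕ | (mnorm N m : ℝ) ≤ t}.ncard : ℝ) ≤ D * t) := by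
    intro t ht
    obtain ⟨hf, hb⟩ := hcount t ht
    refine ⟨hf, ?_⟩
    have h2 : ({m : P →₀ ℕ | (mnorm N m : ℝ) ≤ t}.ncard : ℝ) - κ * t ≤ C * t ^ θ :=
      le_trans (le_abs_self _) hb
    have h3 : t ^ θ ≤ t := by
      calc t ^ θ ≤ t ^ (1 : ℝ) := Real.rpow_le_rpow_of_exponent_le ht (le_of_lt hθ1)
        _ = t := Real.rpow_one t
    have h4 : C * t ^ θ ≤ C * t := mul_le_mul_of_nonneg_left h3 hC0
    rw [hDdef]
    nlinarith
  have hA : ∀ t : ℝ, ∑' m : P →₀ ℕ,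
      Set.indicator {m | (mnorm N m : ℝ) ≤ t} (fun _ => (1 : ℝ≥0∞)) m
        ≤ ENNReal.ofReal (D * t) := KFA.count_le hN hD
  -- adjusted coefficient constant
  set Ca' : ℝ := max Ca (∑ i ∈ Finset.range i₀, ‖a i‖ / B ^ i) with hCa'def
  have hCa'0 : 0 ≤ Ca' :=
    le_trans (Finset.sum_nonneg (fun i _ => by positivity)) (le_max_right _ _)
  have hCa' : ∀ i, ‖a i‖ ≤ Ca' * B ^ i := by
    intro i
    by_cases hi : i₀ ≤ i
    · calc ‖a i‖ ≤ Ca * B ^ i := ha i hi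
        _ ≤ Ca' * B ^ i := mul_le_mul_of_nonneg_right (le_max_left _ _) (by positivity)
    · have hmem : i ∈ Finset.range i₀ := Finset.mem_range.2 (by omega)
      have h1 : ‖a i‖ / B ^ i ≤ ∑ j ∈ Finset.range i₀, ‖a j‖ / B ^ j :=
        Finset.single_le_sum (f := fun j => ‖a j‖ / B ^ j) (fun j _ => by positivity) hmem
      have h2 : ‖a i‖ / B ^ i ≤ Ca' := le_trans h1 (le_max_right _ _)
      calc ‖a i‖ = (‖a i‖ / B ^ i) * B ^ i := by field_simp
        _ ≤ Ca' * B ^ i := mul_le_mul_of_nonneg_right h2 (by positivity)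
  -- the constants
  set ε : ℝ := 1 / (k : ℝ) with hεdef
  set c₀ : ℝ := 4 * D / (1 - 2 ^ (-ε)) with hc₀def
  have hkR : (0 : ℝ) < (k : ℝ) := by exact_mod_cast hk
  have hε0 : 0 < ε := by rw [hεdef]; positivity
  have h2ε : (2 : ℝ) ^ (-ε) < 1 := Real.rpow_lt_one_of_one_lt_of_neg one_lt_two (by linarith)
  have hc₀0 : 0 ≤ c₀ := by rw [hc₀def]; apply div_nonneg (by linarith); linarith
  have h2α : (2 : ℝ) ^ (-α) < 1 := Real.rpow_lt_one_of_one_lt_of_neg one_lt_two (by linarith)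
  set Dbig : ℝ := D * (1 + c₀) ^ (k - 1) * c₀ * (1 - 2 ^ (-α))⁻¹ with hDbigdef
  have hDbig0 : 0 ≤ Dbig := by
    rw [hDbigdef]
    have : (0:ℝ) ≤ (1 - 2 ^ (-α))⁻¹ := by
      apply inv_nonneg.2; linarith
    positivity
  refine ⟨Ca' * Dbig, ?_⟩
  intro x hx
  have hx1 : (1 : ℝ) ≤ x := by linarith
  have hx0 : (0 : ℝ) ≤ x := by linarith
  set Sset : Set (P →₀ ℕ) :=
    {m : P →₀ ℕ | (∀ p, m p = 0 ∨ k ≤ m p) ∧ (mnorm N m : ℝ) ≤ x} with hSset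
  have hSfin : Sset.Finite :=
    Set.Finite.subset (hcount x hx1).1 (fun m hm => hm.2)
  haveI := hSfin.fintype
  -- inner sum simplification
  have hinner : ∀ m : ↥Sset,
      (∑' i : ℕ, ‖a (i + (k + 1))‖
        * (((m.1).support.filter fun p => m.1 p = i + (k + 1)).card : ℝ))
      = ∑ p ∈ (m.1).support.filter (fun p => k + 1 ≤ m.1 p), ‖a (m.1 p)‖ := by
    intro m
    have h1 : ∀ i : ℕ, ‖a (i + (k + 1))‖
        * (((m.1).support.filter fun p => m.1 p = i + (k + 1)).card : ℝ)
        = ∑ p ∈ (m.1).support, (if m.1 p = i + (k + 1) then ‖a (m.1 p)‖ else 0) := by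
      intro i
      rw [Finset.card_filter]
      push_cast
      rw [Finset.mul_sum]
      apply Finset.sum_congr rfl
      intro p _
      by_cases h : m.1 p = i + (k + 1) <;> simp [h]
    rw [tsum_congr h1, Summable.tsum_finsetSum (fun p _ => summable_of_ne_finset_zero
      (s := {m.1 p - (k + 1)}) (fun i hi => if_neg (by
        rw [Finset.mem_singleton] at hi; omega)))]
    rw [Finset.sum_filter]
    apply Finset.sum_congr rfl
    intro p _
    by_cases hple : k + 1 ≤ m.1 p
    · rw [tsum_eq_single (m.1 p - (k + 1)) (fun i hi => if_neg (by omega)),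
        if_pos (by omega), if_pos hple]
    · rw [if_neg hple, tsum_congr (fun i => if_neg (show ¬ m.1 p = i + (k+1) by omega)),
        tsum_zero]
  rw [tsum_congr hinner, tsum_fintype]
  -- the ENNReal bound for the weight sum
  have hT : (∑ m : ↥Sset, ∑ p ∈ (m.1).support.filter (fun p => k + 1 ≤ m.1 p), B ^ (m.1 p))
      ≤ Dbig * x ^ (1 / (k : ℝ)) := by
    have hRHS0 : (0 : ℝ) ≤ Dbig * x ^ (1 / (k : ℝ)) := by positivity
    rw [← ENNReal.ofReal_le_ofReal_iff hRHS0]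
    set WD : (P →₀ ℕ) × P → ℝ≥0∞ :=
      Set.indicator {y : (P →₀ ℕ) × P | (∀ q, y.1 q = 0 ∨ k ≤ y.1 q) ∧
          ((mnorm N y.1 : ℝ) ≤ x) ∧ (k + 1 ≤ y.1 y.2)}
        (fun y => ENNReal.ofReal (B ^ (y.1 y.2))) with hWD
    calc ENNReal.ofReal (∑ m : ↥Sset,
            ∑ p ∈ (m.1).support.filter (fun p => k + 1 ≤ m.1 p), B ^ (m.1 p))
        = ∑ m : ↥Sset, ∑ p ∈ (m.1).support.filter (fun p => k + 1 ≤ m.1 p),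
            ENNReal.ofReal (B ^ (m.1 p)) := by
          rw [ENNReal.ofReal_sum_of_nonneg
            (fun m _ => Finset.sum_nonneg (fun p _ => by positivity))]
          exact Finset.sum_congr rfl
            (fun m _ => ENNReal.ofReal_sum_of_nonneg (fun p _ => by positivity))
      _ ≤ ∑ m : ↥Sset, ∑' p : P, WD (m.1, p) := by
          apply Finset.sum_le_sum
          intro m _
          refine le_trans (le_of_eq (Finset.sum_congr rfl (fun p hp => ?_)))
            (ENNReal.sum_le_tsum _)
          rw [hWD, Set.indicator_of_mem]
          exact ⟨m.2.1, m.2.2, (Finset.mem_filter.1 hp).2⟩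
      _ = ∑' m : ↥Sset, ∑' p : P, WD (m.1, p) := (tsum_fintype _).symm
      _ ≤ ∑' m' : P →₀ ℕ, ∑' p : P, WD (m', p) :=
          ENNReal.tsum_comp_le_tsum_of_injective Subtype.val_injective
            (fun m' => ∑' p : P, WD (m', p))
      _ = ∑' y : (P →₀ ℕ) × P, WD y := ENNReal.tsum_prod'.symm
      _ ≤ ∑' y : ℕ × P × (Fin (k - 1) → (P →₀ ℕ)) × (P →₀ ℕ), KFA.Vfun N k B x y := by
          rw [hWD]
          exact KFA.dom_le_V hN hk B x
      _ ≤ (ENNReal.ofReal (D * x ^ (1 / (k : ℝ))) * ENNReal.ofReal (1 + c₀) ^ (k - 1)) *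
            (ENNReal.ofReal c₀ * ENNReal.ofReal ((1 - 2 ^ (-α))⁻¹)) :=
          KFA.master hN hk hD0 hA hα hB0 hB2 hx0 hεdef hc₀def
      _ = ENNReal.ofReal (Dbig * x ^ (1 / (k : ℝ))) := by
          rw [← ENNReal.ofReal_pow (by linarith : (0:ℝ) ≤ 1 + c₀),
            ← ENNReal.ofReal_mul (by positivity),
            ← ENNReal.ofReal_mul (by
              have : (0:ℝ) ≤ (1 - 2 ^ (-α))⁻¹ := by apply inv_nonneg.2; linarith
              positivity),
            ← ENNReal.ofReal_mul (by positivity)]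
          congr 1
          rw [hDbigdef]
          ring
  calc ∑ m : ↥Sset, ∑ p ∈ (m.1).support.filter (fun p => k + 1 ≤ m.1 p), ‖a (m.1 p)‖
      ≤ ∑ m : ↥Sset, ∑ p ∈ (m.1).support.filter (fun p => k + 1 ≤ m.1 p),
          Ca' * B ^ (m.1 p) :=
        Finset.sum_le_sum (fun m _ => Finset.sum_le_sum (fun p _ => hCa' _))
    _ = Ca' * ∑ m : ↥Sset, ∑ p ∈ (m.1).support.filter (fun p => k + 1 ≤ m.1 p),
          B ^ (m.1 p) := by
        rw [Finset.mul_sum]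
        apply Finset.sum_congr rfl
        intro m _
        rw [Finset.mul_sum]
    _ ≤ Ca' * (Dbig * x ^ (1 / (k : ℝ))) := mul_le_mul_of_nonneg_left hT hCa'0
    _ = (Ca' * Dbig) * x ^ (1 / (k : ℝ)) := by ring
end
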